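/- arXiv:2605.20903 — 4 statements merged into one kernel-verified Lean document; each statement's English description precedes it below -/
import Mathlib

section
/- The relation ⊲ is a partial order (reflexive, antisymmetric and transitive) on the set of fb-tableaux of size n. -/
open scoped Classical

namespace EsTam

/-- A cell `(i, j)`: `i` is the row index, `j` the column index. -/
abbrev Cell := ℕ × ℕ

/-- Membership in the staircase shape of size `n`: rows `1` and `2` consist of the
cells `(i, j)` with `1 ≤ j ≤ n`, and row `i` for `3 ≤ i ≤ n` consists of the cells
`(i, j)` with `i - 1 ≤ j ≤ n`. -/
def IsCell (n : ℕ) (c : Cell) : Prop :=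
  1 ≤ c.1 ∧ c.1 ≤ n ∧ 1 ≤ c.2 ∧ c.2 ≤ n ∧ (c.1 ≤ 2 ∨ c.1 - 1 ≤ c.2)

/-- The root cell `(1, n)`. -/
def root (n : ℕ) : Cell := (1, n)

/-- The border cells `(i, i - 1)` for `2 ≤ i ≤ n`. -/
def IsBorder (n : ℕ) (c : Cell) : Prop :=
  2 ≤ c.1 ∧ c.1 ≤ n ∧ c.2 = c.1 - 1

/-- An fb-tableau of size `n`: a set of cells of the staircase shape containing
the root and all border cells, and such that every cell other than the root has a
cell of the tableau strictly to its left in its row (same `i`, larger `j`) or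
strictly above it in its column (same `j`, smaller `i`). -/
structure FB (n : ℕ) where
  cells : Set Cell
  isCell_of_mem : ∀ c ∈ cells, IsCell n c
  root_mem : root n ∈ cells
  border_mem : ∀ c : Cell, IsBorder n c → c ∈ cells
  supported : ∀ c ∈ cells, c ≠ root n →
    (∃ j', c.2 < j' ∧ ((c.1, j') : Cell) ∈ cells) ∨
    (∃ i', i' < c.1 ∧ ((i', c.2) : Cell) ∈ cells)

variable {n : ℕ}

/-- `c` is a left-arrow of `T`: a cell of `T`, other than the root, with no cell of
`T` strictly to its left in its row. -/
def IsLeftArrow (T : FB n) (c : Cell) : Prop :=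
  c ∈ T.cells ∧ c ≠ root n ∧ ∀ j', c.2 < j' → ((c.1, j') : Cell) ∉ T.cells

/-- `c` is an up-arrow of `T`: a cell of `T`, other than the root, with no cell of
`T` strictly above it in its column. -/
def IsUpArrow (T : FB n) (c : Cell) : Prop :=
  c ∈ T.cells ∧ c ≠ root n ∧ ∀ i', i' < c.1 → ((i', c.2) : Cell) ∉ T.cells

/-- The row space of `T`: cells lying, in their row, weakly to the right of the
root or of a left-arrow of `T`. -/
def RowSp (T : FB n) : Set Cell :=
  {c | IsCell n c ∧ ∃ j', c.2 ≤ j' ∧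
    (((c.1, j') : Cell) = root n ∨ IsLeftArrow T (c.1, j'))}

/-- The column space of `T`: cells lying, in their column, weakly below the root or
an up-arrow of `T`. -/
def ColSp (T : FB n) : Set Cell :=
  {c | IsCell n c ∧ ∃ i', i' ≤ c.1 ∧
    (((i', c.2) : Cell) = root n ∨ IsUpArrow T (i', c.2))}

/-- `c` is a free cell of `T`: it lies strictly below the up-arrow of `T` in its
column and strictly to the right of the left-arrow of `T` in its row. -/
def IsFree (T : FB n) (c : Cell) : Prop :=
  IsCell n c ∧ (∃ i', i' < c.1 ∧ IsUpArrow T (i', c.2)) ∧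
    (∃ j', c.2 < j' ∧ IsLeftArrow T (c.1, j'))

/-- The relation `S ⊲ T` on fb-tableaux of size `n`. -/
def Lhd (S T : FB n) : Prop :=
  ColSp S ⊆ ColSp T ∧ RowSp T ⊆ RowSp S ∧
    ∀ c : Cell, IsFree S c → IsFree T c → c ∈ S.cells → c ∈ T.cells

/-- `T` covers `S` in `esTam n`. -/
def CovRel (S T : FB n) : Prop :=
  Lhd S T ∧ S ≠ T ∧ ∀ U : FB n, Lhd S U → Lhd U T → U = S ∨ U = T

/-- `m` is the greatest lower bound of `x` and `y` in `esTam n`. -/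
def IsMeet (x y m : FB n) : Prop :=
  Lhd m x ∧ Lhd m y ∧ ∀ t : FB n, Lhd t x → Lhd t y → Lhd t m

/-- `j` is the least upper bound of `x` and `y` in `esTam n`. -/
def IsJoin (x y j : FB n) : Prop :=
  Lhd x j ∧ Lhd y j ∧ ∀ t : FB n, Lhd x t → Lhd y t → Lhd j t

/-- `T` is join-irreducible: it covers exactly one element. -/
def JoinIrr (T : FB n) : Prop := ∃! S : FB n, CovRel S T

/-- `T` is meet-irreducible: it is covered by exactly one element. -/
def MeetIrr (T : FB n) : Prop := ∃! S : FB n, CovRel T S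

/-- A strict chain `f 0 ⊲ f 1 ⊲ ⋯ ⊲ f m` of length `m`. -/
def IsStrictChain {m : ℕ} (f : Fin (m + 1) → FB n) : Prop :=
  ∀ i j : Fin (m + 1), i < j → Lhd (f i) (f j) ∧ f i ≠ f j

/-- `T` is small: every cell of `T` other than the root is an arrow. -/
def IsSmall (T : FB n) : Prop :=
  ∀ c ∈ T.cells, c ≠ root n → IsLeftArrow T c ∨ IsUpArrow T c

/-- `T` is binary: `T` has no free cells. -/
def IsBinary (T : FB n) : Prop := ∀ c : Cell, ¬ IsFree T c

/-- `c` lies strictly above the up-arrow of `T` in its column. -/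
def PointedUp (T : FB n) (c : Cell) : Prop :=
  ∃ i', c.1 < i' ∧ IsUpArrow T (i', c.2)

/-- `c` is pointed by a left-arrow of `T`: it lies strictly to the left of the
left-arrow of `T` in its row. -/
def PointedLeft (T : FB n) (c : Cell) : Prop :=
  ∃ j', j' < c.2 ∧ IsLeftArrow T (c.1, j')

end EsTam

/-!
The row and column spaces of an fb-tableau determine its arrows: the up-arrow in a column is
the topmost cell of the column space there, and the left-arrow in a row is the leftmost cell
of the row space. Every cell other than the root is an arrow or free, so if `S ⊲ T ⊲ S` the two
tableaux have the same arrows and the same free cells, and condition (iii) in both directions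
identifies their free dots. For transitivity, a cell free in `S` and in `U` is free in `T`:
the up-arrow of `T` in its column lies weakly above that of `S`, and the left-arrow of `T` in
its row weakly to the left of that of `U`.
-/

namespace EsTam

variable {n : ℕ}

theorem FB.ext {S T : FB n} (h : S.cells = T.cells) : S = T := by
  cases S; cases T; cases h; rfl

theorem IsUpArrow.unique {T : FB n} {a b j : ℕ} (ha : IsUpArrow T (a, j))
    (hb : IsUpArrow T (b, j)) : a = b := by
  rcases lt_trichotomy a b with h | h | h
  · exact absurd ha.1 (hb.2.2 a h)
  · exact h
  · exact absurd hb.1 (ha.2.2 b h)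

theorem IsLeftArrow.unique {T : FB n} {i a b : ℕ} (ha : IsLeftArrow T (i, a))
    (hb : IsLeftArrow T (i, b)) : a = b := by
  rcases lt_trichotomy a b with h | h | h
  · exact absurd hb.1 (ha.2.2 b h)
  · exact h
  · exact absurd ha.1 (hb.2.2 a h)

theorem IsUpArrow.snd_ne {T : FB n} {c : Cell} (h : IsUpArrow T c) : c.2 ≠ n := by
  intro hc
  rcases Nat.lt_or_ge 1 c.1 with h1 | h1
  · exact h.2.2 1 h1 (by rw [hc]; exact T.root_mem)
  · exact h.2.1 (Prod.ext (le_antisymm h1 (T.isCell_of_mem c h.1).1) hc)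

theorem IsLeftArrow.fst_ne_one {T : FB n} {c : Cell} (h : IsLeftArrow T c) : c.1 ≠ 1 := by
  intro hc
  have hlt : c.2 < n :=
    lt_of_le_of_ne (T.isCell_of_mem c h.1).2.2.2.1 fun hn => h.2.1 (Prod.ext hc hn)
  exact h.2.2 n hlt (by rw [hc]; exact T.root_mem)

theorem IsUpArrow.exists_of_colSp_subset {S T : FB n} (h : ColSp S ⊆ ColSp T) {s j : ℕ}
    (hs : IsUpArrow S (s, j)) : ∃ t ≤ s, IsUpArrow T (t, j) := by
  obtain ⟨-, t, hts, hroot | hup⟩ := h ⟨S.isCell_of_mem _ hs.1, s, le_rfl, Or.inr hs⟩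
  · exact absurd (congrArg Prod.snd hroot) hs.snd_ne
  · exact ⟨t, hts, hup⟩

theorem IsLeftArrow.exists_of_rowSp_subset {S T : FB n} (h : RowSp S ⊆ RowSp T) {i j : ℕ}
    (hs : IsLeftArrow S (i, j)) : ∃ j', j ≤ j' ∧ IsLeftArrow T (i, j') := by
  obtain ⟨-, j', hjj', hroot | hleft⟩ := h ⟨S.isCell_of_mem _ hs.1, j, le_rfl, Or.inr hs⟩
  · exact absurd (congrArg Prod.fst hroot) hs.fst_ne_one
  · exact ⟨j', hjj', hleft⟩

theorem IsUpArrow.of_colSp_eq {S T : FB n} (h : ColSp S = ColSp T) {c : Cell}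
    (hc : IsUpArrow S c) : IsUpArrow T c := by
  obtain ⟨t, hts, hT⟩ := IsUpArrow.exists_of_colSp_subset h.subset hc
  obtain ⟨s, hst, hS⟩ := IsUpArrow.exists_of_colSp_subset h.symm.subset hT
  obtain rfl : t = c.1 := le_antisymm hts (hS.unique hc ▸ hst)
  exact hT

theorem IsLeftArrow.of_rowSp_eq {S T : FB n} (h : RowSp S = RowSp T) {c : Cell}
    (hc : IsLeftArrow S c) : IsLeftArrow T c := by
  obtain ⟨t, hst, hT⟩ := IsLeftArrow.exists_of_rowSp_subset h.subset hc
  obtain ⟨s, hts, hS⟩ := IsLeftArrow.exists_of_rowSp_subset h.symm.subset hT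
  obtain rfl : t = c.2 := le_antisymm (hS.unique hc ▸ hts) hst
  exact hT

theorem FB.exists_isUpArrow_of_mem (T : FB n) {i j : ℕ} (h : (i, j) ∈ T.cells) (hj : j ≠ n) :
    ∃ i' ≤ i, IsUpArrow T (i', j) := by
  have hex : ∃ i', ((i', j) : Cell) ∈ T.cells := ⟨i, h⟩
  exact ⟨Nat.find hex, Nat.find_min' hex h, Nat.find_spec hex,
    fun hroot => hj (congrArg Prod.snd hroot), fun _ hi' => Nat.find_min hex hi'⟩

theorem FB.exists_isLeftArrow_of_mem (T : FB n) {i j : ℕ} (h : (i, j) ∈ T.cells) (hi : i ≠ 1) :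
    ∃ j', j ≤ j' ∧ IsLeftArrow T (i, j') := by
  let P : ℕ → Prop := fun j' => ((i, j') : Cell) ∈ T.cells
  have hjn : j ≤ n := (T.isCell_of_mem _ h).2.2.2.1
  refine ⟨Nat.findGreatest P n, Nat.le_findGreatest hjn h, Nat.findGreatest_spec (P := P) hjn h,
    fun hroot => hi (congrArg Prod.fst hroot), fun j' hj' hmem => ?_⟩
  exact absurd (Nat.le_findGreatest (P := P) (T.isCell_of_mem _ hmem).2.2.2.1 hmem) (not_le.2 hj')

theorem FB.isFree_of_mem (T : FB n) {c : Cell} (hc : c ∈ T.cells) (hroot : c ≠ root n)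
    (hleft : ¬ IsLeftArrow T c) (hup : ¬ IsUpArrow T c) : IsFree T c := by
  obtain ⟨j₀, hj₀, hmemj⟩ : ∃ j', c.2 < j' ∧ ((c.1, j') : Cell) ∈ T.cells := by
    by_contra! h
    exact hleft ⟨hc, hroot, h⟩
  obtain ⟨i₀, hi₀, hmemi⟩ : ∃ i', i' < c.1 ∧ ((i', c.2) : Cell) ∈ T.cells := by
    by_contra! h
    exact hup ⟨hc, hroot, h⟩
  have hi₀1 := (T.isCell_of_mem _ hmemi).1
  have hj₀n := (T.isCell_of_mem _ hmemj).2.2.2.1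
  obtain ⟨i', hi', hup'⟩ := T.exists_isUpArrow_of_mem hmemi (by omega)
  obtain ⟨j', hj', hleft'⟩ := T.exists_isLeftArrow_of_mem hmemj (by omega)
  exact ⟨T.isCell_of_mem c hc, ⟨i', by omega, hup'⟩, ⟨j', by omega, hleft'⟩⟩

theorem IsFree.of_colSp_subset_of_rowSp_subset {S T U : FB n} (hST : ColSp S ⊆ ColSp T)
    (hUT : RowSp U ⊆ RowSp T) {c : Cell} (hS : IsFree S c) (hU : IsFree U c) : IsFree T c := by
  obtain ⟨hcell, ⟨i, hi, hupS⟩, -⟩ := hS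
  obtain ⟨-, -, ⟨j, hj, hleftU⟩⟩ := hU
  obtain ⟨i', hi', hupT⟩ := hupS.exists_of_colSp_subset hST
  obtain ⟨j', hj', hleftT⟩ := hleftU.exists_of_rowSp_subset hUT
  exact ⟨hcell, ⟨i', hi'.trans_lt hi, hupT⟩, ⟨j', hj.trans_le hj', hleftT⟩⟩

theorem Lhd.refl (T : FB n) : Lhd T T :=
  ⟨subset_rfl, subset_rfl, fun _ _ _ hc => hc⟩

theorem Lhd.trans {S T U : FB n} (hST : Lhd S T) (hTU : Lhd T U) : Lhd S U := by
  refine ⟨hST.1.trans hTU.1, hTU.2.1.trans hST.2.1, fun c hS hU hcS => ?_⟩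
  have hT : IsFree T c := hS.of_colSp_subset_of_rowSp_subset hST.1 hTU.2.1 hU
  exact hTU.2.2 c hT hU (hST.2.2 c hS hT hcS)

theorem Lhd.cells_subset {S T : FB n} (hST : Lhd S T) (hTS : Lhd T S) :
    S.cells ⊆ T.cells := by
  intro c hc
  by_cases hroot : c = root n
  · exact hroot ▸ T.root_mem
  by_cases hleft : IsLeftArrow S c
  · exact (hleft.of_rowSp_eq (hTS.2.1.antisymm hST.2.1)).1
  by_cases hup : IsUpArrow S c
  · exact (hup.of_colSp_eq (hST.1.antisymm hTS.1)).1
  have hS : IsFree S c := S.isFree_of_mem hc hroot hleft hup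
  exact hST.2.2 c hS (hS.of_colSp_subset_of_rowSp_subset hST.1 hTS.2.1 hS) hc

theorem lhd_isPartialOrder_general (n : ℕ) :
    (∀ T : FB n, Lhd T T) ∧
    (∀ S T : FB n, Lhd S T → Lhd T S → S = T) ∧
    (∀ S T U : FB n, Lhd S T → Lhd T U → Lhd S U) :=
  ⟨Lhd.refl, fun _ _ hST hTS => FB.ext (hST.cells_subset hTS |>.antisymm (hTS.cells_subset hST)),
    fun _ _ _ => Lhd.trans⟩

/-- the relation `⊲` is a partial order (reflexive, antisymmetric and
transitive) on the set of fb-tableaux of size `n`. -/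
theorem lhd_isPartialOrder (n : ℕ) (hn : 1 ≤ n) :
    (∀ T : FB n, Lhd T T) ∧
    (∀ S T : FB n, Lhd S T → Lhd T S → S = T) ∧
    (∀ S T U : FB n, Lhd S T → Lhd T U → Lhd S U) :=
  lhd_isPartialOrder_general n

end EsTam
end

section
/- For every fb-tableau T of size n, the conjugate T' is again an fb-tableau of size n, the map T ↦ T' is an involution on the set of fb-tableaux of size n, and for all fb-tableaux S, T of size n one has S ⊲ T if and only if T' ⊲ S'. In particular, esTam_n is self-dual. -/
open scoped Classical

namespace EsTam

/-- The set of cells of the conjugate of `T`: the cells `(n+1-j, n+1-i)` such that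
either `(i,j) ∈ T` and `(i,j)` is not a free cell of `T` other than a border cell,
or `(i,j) ∉ T` and `(i,j)` is a free cell of `T` that is not a border cell. -/
def conjCells (n : ℕ) (T : FB n) : Set Cell :=
  {c | ∃ i j : ℕ, c = (n + 1 - j, n + 1 - i) ∧
    ((((i, j) : Cell) ∈ T.cells ∧ ¬(IsFree T (i, j) ∧ ¬ IsBorder n (i, j))) ∨
     (((i, j) : Cell) ∉ T.cells ∧ IsFree T (i, j) ∧ ¬ IsBorder n (i, j)))}

/-!
The conjugate of `T` is obtained by toggling the free non-border cells of `T` and then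
reflecting in the anti-diagonal, `conj (i, j) = (n + 1 - j, n + 1 - i)`. Toggling free
cells changes neither the arrows nor the question whether a cell has a dot to its left or
above it, since every free cell has the left-arrow of its row to its left and the up-arrow
of its column above it; the reflection exchanges "to the left in the row" with "above in
the column". Hence left-arrows of `T` become up-arrows of `T'` and vice versa, row spaces
become column spaces, free cells stay free, and on free cells membership is complemented
(away from the border), which turns condition (iii) of `S ⊲ T` into that of `T' ⊲ S'`.
-/

open scoped symmDiff

variable {n : ℕ} {c : Cell} {A B : Set Cell}

def shape (n : ℕ) : Set Cell := {c | IsCell n c}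

-- An involution of `shape n` only: outside it the ℕ-subtraction truncates.
def conj (n : ℕ) (c : Cell) : Cell := (n + 1 - c.2, n + 1 - c.1)

def HasLeft (A : Set Cell) (c : Cell) : Prop := ∃ j, c.2 < j ∧ (c.1, j) ∈ A

def HasAbove (A : Set Cell) (c : Cell) : Prop := ∃ i, i < c.1 ∧ (i, c.2) ∈ A

lemma IsCell.conj (h : IsCell n c) : IsCell n (conj n c) := by
  simp only [IsCell, EsTam.conj] at *
  omega

lemma conj_conj (h : IsCell n c) : conj n (conj n c) = c := by
  obtain ⟨i, j⟩ := c
  simp only [IsCell, conj, Prod.mk.injEq] at *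
  omega

lemma conj_root : conj n (root n) = root n := by
  simp only [conj, root, Prod.mk.injEq]
  omega

lemma conj_eq_root_iff (h : IsCell n c) : conj n c = root n ↔ c = root n :=
  ⟨fun he => by rw [← conj_conj h, he, conj_root], fun he => by rw [he, conj_root]⟩

lemma IsBorder.isCell (h : IsBorder n c) : IsCell n c := by
  simp only [IsBorder, IsCell] at *
  omega

lemma IsBorder.conj (h : IsBorder n c) : IsBorder n (conj n c) := by
  simp only [IsBorder, EsTam.conj] at *
  omega

lemma isBorder_conj_iff (h : IsCell n c) : IsBorder n (conj n c) ↔ IsBorder n c :=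
  ⟨fun hb => conj_conj h ▸ hb.conj, IsBorder.conj⟩

lemma injOn_conj : Set.InjOn (conj n) (shape n) := fun c hc d hd h => by
  rw [← conj_conj hc, h, conj_conj hd]

lemma image_conj_subset_shape (hA : A ⊆ shape n) : conj n '' A ⊆ shape n := by
  rintro _ ⟨c, hc, rfl⟩
  exact (hA hc).conj

lemma conj_mem_image_conj_iff (hA : A ⊆ shape n) (hc : IsCell n c) :
    conj n c ∈ conj n '' A ↔ c ∈ A :=
  injOn_conj.mem_image_iff hA hc

lemma image_conj_image_conj (hA : A ⊆ shape n) : conj n '' (conj n '' A) = A := by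
  rw [Set.image_image, Set.image_congr fun c hc => conj_conj (hA hc), Set.image_id']

lemma eq_image_conj (hA : A ⊆ shape n) (hB : B ⊆ shape n)
    (h : ∀ c, IsCell n c → (conj n c ∈ A ↔ c ∈ B)) : A = conj n '' B := by
  ext d
  constructor
  · intro hd
    refine ⟨conj n d, (h _ (hA hd).conj).1 ?_, conj_conj (hA hd)⟩
    rwa [conj_conj (hA hd)]
  · rintro ⟨c, hc, rfl⟩
    exact (h c (hB hc)).2 hc

lemma hasLeft_image_conj (hA : A ⊆ shape n) (hc : IsCell n c) :
    HasLeft (conj n '' A) (conj n c) ↔ HasAbove A c := by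
  obtain ⟨i, j⟩ := c
  constructor
  · rintro ⟨j', hj', ⟨i', j''⟩, hmem, he⟩
    have hcell : IsCell n (i', j'') := hA hmem
    simp only [conj, IsCell, Prod.mk.injEq] at he hcell hc hj'
    obtain rfl : j'' = j := by omega
    exact ⟨i', by omega, hmem⟩
  · rintro ⟨i', hi', hmem⟩
    have hcell : IsCell n (i', j) := hA hmem
    simp only [IsCell] at hcell hc hi'
    exact ⟨n + 1 - i', by simp only [conj]; omega, (i', j), hmem, rfl⟩

lemma hasAbove_image_conj (hA : A ⊆ shape n) (hc : IsCell n c) :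
    HasAbove (conj n '' A) (conj n c) ↔ HasLeft A c := by
  have h := hasLeft_image_conj (image_conj_subset_shape hA) hc.conj
  rwa [image_conj_image_conj hA, conj_conj hc, Iff.comm] at h

lemma exists_le_iff_mem_or_hasAbove :
    (∃ i, i ≤ c.1 ∧ (i, c.2) ∈ A) ↔ c ∈ A ∨ HasAbove A c := by
  constructor
  · rintro ⟨i, hi, hmem⟩
    rcases hi.lt_or_eq with hi | rfl
    exacts [Or.inr ⟨i, hi, hmem⟩, Or.inl hmem]
  · rintro (hmem | ⟨i, hi, hmem⟩)
    exacts [⟨c.1, le_rfl, hmem⟩, ⟨i, hi.le, hmem⟩]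

lemma exists_ge_iff_mem_or_hasLeft :
    (∃ j, c.2 ≤ j ∧ (c.1, j) ∈ A) ↔ c ∈ A ∨ HasLeft A c := by
  constructor
  · rintro ⟨j, hj, hmem⟩
    rcases hj.lt_or_eq with hj | rfl
    exacts [Or.inr ⟨j, hj, hmem⟩, Or.inl hmem]
  · rintro (hmem | ⟨j, hj, hmem⟩)
    exacts [⟨c.2, le_rfl, hmem⟩, ⟨j, hj.le, hmem⟩]

section Arrows

variable {T : FB n}

attribute [ext] FB

lemma FB.cells_subset_shape (T : FB n) : T.cells ⊆ shape n := T.isCell_of_mem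

def leftArrows (T : FB n) : Set Cell := {c | IsLeftArrow T c}

def upArrows (T : FB n) : Set Cell := {c | IsUpArrow T c}

lemma leftArrows_subset_shape (T : FB n) : leftArrows T ⊆ shape n :=
  fun c h => T.isCell_of_mem c h.1

lemma upArrows_subset_shape (T : FB n) : upArrows T ⊆ shape n :=
  fun c h => T.isCell_of_mem c h.1

lemma isLeftArrow_iff : IsLeftArrow T c ↔ c ∈ T.cells ∧ c ≠ root n ∧ ¬ HasLeft T.cells c := by
  simp only [IsLeftArrow, HasLeft, not_exists, not_and]

lemma isUpArrow_iff : IsUpArrow T c ↔ c ∈ T.cells ∧ c ≠ root n ∧ ¬ HasAbove T.cells c := by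
  simp only [IsUpArrow, HasAbove, not_exists, not_and]

lemma isFree_iff :
    IsFree T c ↔ IsCell n c ∧ HasAbove (upArrows T) c ∧ HasLeft (leftArrows T) c :=
  Iff.rfl

lemma IsFree.hasLeft (h : IsFree T c) : HasLeft T.cells c :=
  let ⟨_, _, j, hj, hL⟩ := h
  ⟨j, hj, hL.1⟩

lemma IsFree.hasAbove (h : IsFree T c) : HasAbove T.cells c :=
  let ⟨_, ⟨i, hi, hU⟩, _⟩ := h
  ⟨i, hi, hU.1⟩

lemma IsLeftArrow.not_isFree (h : IsLeftArrow T c) : ¬ IsFree T c :=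
  fun hf => (isLeftArrow_iff.1 h).2.2 hf.hasLeft

lemma IsUpArrow.not_isFree (h : IsUpArrow T c) : ¬ IsFree T c :=
  fun hf => (isUpArrow_iff.1 h).2.2 hf.hasAbove

lemma root_not_isFree : ¬ IsFree T (root n) := by
  rintro ⟨-, -, j, hj, hL⟩
  have := (T.isCell_of_mem _ hL.1).2.2.2.1
  simp only [root] at hj this
  omega

lemma hasLeft_symmDiff {F : Set Cell} (hF : ∀ c ∈ F, IsFree T c) :
    HasLeft (T.cells ∆ F) c ↔ HasLeft T.cells c := by
  have left_of_mem :
      ∀ j, (c.1, j) ∈ F → ∃ j', j < j' ∧ (c.1, j') ∈ T.cells ∧ (c.1, j') ∉ F := by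
    intro j hj
    obtain ⟨-, -, j', hj', hL⟩ := hF _ hj
    exact ⟨j', hj', hL.1, fun h => hL.not_isFree (hF _ h)⟩
  constructor
  · rintro ⟨j, hj, ⟨hT, -⟩ | ⟨hF', -⟩⟩
    · exact ⟨j, hj, hT⟩
    · obtain ⟨j', hj', hT, -⟩ := left_of_mem j hF'
      exact ⟨j', hj.trans hj', hT⟩
  · rintro ⟨j, hj, hT⟩
    by_cases hF' : (c.1, j) ∈ F
    · obtain ⟨j', hj', hT', hF''⟩ := left_of_mem j hF'
      exact ⟨j', hj.trans hj', Or.inl ⟨hT', hF''⟩⟩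
    · exact ⟨j, hj, Or.inl ⟨hT, hF'⟩⟩

lemma hasAbove_symmDiff {F : Set Cell} (hF : ∀ c ∈ F, IsFree T c) :
    HasAbove (T.cells ∆ F) c ↔ HasAbove T.cells c := by
  have above_of_mem :
      ∀ i, (i, c.2) ∈ F → ∃ i', i' < i ∧ (i', c.2) ∈ T.cells ∧ (i', c.2) ∉ F := by
    intro i hi
    obtain ⟨-, ⟨i', hi', hU⟩, -⟩ := hF _ hi
    exact ⟨i', hi', hU.1, fun h => hU.not_isFree (hF _ h)⟩
  constructor
  · rintro ⟨i, hi, ⟨hT, -⟩ | ⟨hF', -⟩⟩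
    · exact ⟨i, hi, hT⟩
    · obtain ⟨i', hi', hT, -⟩ := above_of_mem i hF'
      exact ⟨i', hi'.trans hi, hT⟩
  · rintro ⟨i, hi, hT⟩
    by_cases hF' : (i, c.2) ∈ F
    · obtain ⟨i', hi', hT', hF''⟩ := above_of_mem i hF'
      exact ⟨i', hi'.trans hi, Or.inl ⟨hT', hF''⟩⟩
    · exact ⟨i, hi, Or.inl ⟨hT, hF'⟩⟩

lemma colSp_eq (T : FB n) :
    ColSp T = {c | IsCell n c ∧
      (c ∈ insert (root n) (upArrows T) ∨ HasAbove (insert (root n) (upArrows T)) c)} :=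
  Set.ext fun _ =>
    and_congr_right' (exists_le_iff_mem_or_hasAbove (A := insert (root n) (upArrows T)))

lemma rowSp_eq (T : FB n) :
    RowSp T = {c | IsCell n c ∧
      (c ∈ insert (root n) (leftArrows T) ∨ HasLeft (insert (root n) (leftArrows T)) c)} :=
  Set.ext fun _ =>
    and_congr_right' (exists_ge_iff_mem_or_hasLeft (A := insert (root n) (leftArrows T)))

end Arrows

section Conjugate

variable {T : FB n}

def toggled (T : FB n) : Set Cell := {c | IsFree T c ∧ ¬ IsBorder n c}

lemma symmDiff_toggled_subset_shape (T : FB n) : T.cells ∆ toggled T ⊆ shape n := by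
  rintro c (⟨hT, -⟩ | ⟨hF, -⟩)
  exacts [T.isCell_of_mem c hT, hF.1.1]

lemma mem_symmDiff_toggled_iff_of_not_isFree (h : ¬ IsFree T c) :
    c ∈ T.cells ∆ toggled T ↔ c ∈ T.cells := by
  simp [Set.mem_symmDiff, toggled, h]

lemma mem_symmDiff_toggled_iff_not_mem (h : IsFree T c) (hb : ¬ IsBorder n c) :
    c ∈ T.cells ∆ toggled T ↔ c ∉ T.cells := by
  simp [Set.mem_symmDiff, toggled, h, hb]

lemma mem_symmDiff_toggled_of_isBorder (h : IsBorder n c) : c ∈ T.cells ∆ toggled T :=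
  Or.inl ⟨T.border_mem c h, fun hF => hF.2 h⟩

lemma conjCells_eq_image (T : FB n) : conjCells n T = conj n '' (T.cells ∆ toggled T) := by
  ext d
  constructor
  · rintro ⟨i, j, rfl, h⟩
    exact ⟨(i, j), by simp only [Set.mem_symmDiff, toggled, Set.mem_ofPred_eq]; tauto, rfl⟩
  · rintro ⟨⟨i, j⟩, h, rfl⟩
    simp only [Set.mem_symmDiff, toggled, Set.mem_ofPred_eq] at h
    exact ⟨i, j, rfl, by tauto⟩

lemma hasLeft_image_conj_symmDiff_toggled (hc : IsCell n c) :
    HasLeft (conj n '' (T.cells ∆ toggled T)) (conj n c) ↔ HasAbove T.cells c := by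
  rw [hasLeft_image_conj (symmDiff_toggled_subset_shape T) hc,
    hasAbove_symmDiff fun _ h => h.1]

lemma hasAbove_image_conj_symmDiff_toggled (hc : IsCell n c) :
    HasAbove (conj n '' (T.cells ∆ toggled T)) (conj n c) ↔ HasLeft T.cells c := by
  rw [hasAbove_image_conj (symmDiff_toggled_subset_shape T) hc,
    hasLeft_symmDiff fun _ h => h.1]

def conjFB (T : FB n) : FB n where
  cells := conjCells n T
  isCell_of_mem := by
    rw [conjCells_eq_image]
    exact image_conj_subset_shape (symmDiff_toggled_subset_shape T)
  root_mem := by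
    rw [conjCells_eq_image]
    exact ⟨root n, Or.inl ⟨T.root_mem, fun h => root_not_isFree h.1⟩, conj_root⟩
  border_mem c hc := by
    rw [conjCells_eq_image]
    exact ⟨conj n c, mem_symmDiff_toggled_of_isBorder hc.conj, conj_conj hc.isCell⟩
  supported := by
    rw [conjCells_eq_image]
    rintro _ ⟨c, hc, rfl⟩ hroot
    have hcell := symmDiff_toggled_subset_shape T hc
    change HasLeft _ _ ∨ HasAbove _ _
    rw [hasLeft_image_conj_symmDiff_toggled hcell, hasAbove_image_conj_symmDiff_toggled hcell]
    rcases hc with ⟨hT, -⟩ | ⟨hF, -⟩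
    · exact (T.supported c hT fun h => hroot (by rw [h, conj_root])).symm
    · exact Or.inl hF.1.hasAbove

lemma conjFB_cells (T : FB n) : (conjFB T).cells = conj n '' (T.cells ∆ toggled T) :=
  conjCells_eq_image T

lemma conj_mem_conjFB_iff (hc : IsCell n c) :
    conj n c ∈ (conjFB T).cells ↔ c ∈ T.cells ∆ toggled T := by
  rw [conjFB_cells]
  exact conj_mem_image_conj_iff (symmDiff_toggled_subset_shape T) hc

lemma isUpArrow_conjFB_conj_iff (hc : IsCell n c) :
    IsUpArrow (conjFB T) (conj n c) ↔ IsLeftArrow T c := by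
  rw [isUpArrow_iff, isLeftArrow_iff, conj_mem_conjFB_iff hc, ne_eq, conj_eq_root_iff hc,
    conjFB_cells, hasAbove_image_conj_symmDiff_toggled hc, ← ne_eq]
  exact and_congr_left fun h =>
    mem_symmDiff_toggled_iff_of_not_isFree fun hF => h.2 hF.hasLeft

lemma isLeftArrow_conjFB_conj_iff (hc : IsCell n c) :
    IsLeftArrow (conjFB T) (conj n c) ↔ IsUpArrow T c := by
  rw [isUpArrow_iff, isLeftArrow_iff, conj_mem_conjFB_iff hc, ne_eq, conj_eq_root_iff hc,
    conjFB_cells, hasLeft_image_conj_symmDiff_toggled hc, ← ne_eq]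
  exact and_congr_left fun h =>
    mem_symmDiff_toggled_iff_of_not_isFree fun hF => h.2 hF.hasAbove

lemma upArrows_conjFB (T : FB n) : upArrows (conjFB T) = conj n '' leftArrows T :=
  eq_image_conj (upArrows_subset_shape _) (leftArrows_subset_shape T)
    fun _ hc => isUpArrow_conjFB_conj_iff hc

lemma leftArrows_conjFB (T : FB n) : leftArrows (conjFB T) = conj n '' upArrows T :=
  eq_image_conj (leftArrows_subset_shape _) (upArrows_subset_shape T)
    fun _ hc => isLeftArrow_conjFB_conj_iff hc

lemma isFree_conjFB_conj_iff (hc : IsCell n c) : IsFree (conjFB T) (conj n c) ↔ IsFree T c := by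
  rw [isFree_iff, isFree_iff, upArrows_conjFB, leftArrows_conjFB,
    hasAbove_image_conj (leftArrows_subset_shape T) hc,
    hasLeft_image_conj (upArrows_subset_shape T) hc]
  simp only [hc, hc.conj, true_and, and_comm]

lemma conj_mem_symmDiff_toggled_conjFB_iff (hc : IsCell n c) :
    conj n c ∈ (conjFB T).cells ∆ toggled (conjFB T) ↔ c ∈ T.cells := by
  simp only [Set.mem_symmDiff, toggled, Set.mem_ofPred_eq, conj_mem_conjFB_iff hc,
    isFree_conjFB_conj_iff hc, isBorder_conj_iff hc]
  tauto

lemma conjCells_conjFB (T : FB n) : conjCells n (conjFB T) = T.cells := by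
  rw [conjCells_eq_image, eq_image_conj (symmDiff_toggled_subset_shape _) T.cells_subset_shape
    fun _ hc => conj_mem_symmDiff_toggled_conjFB_iff hc, image_conj_image_conj T.cells_subset_shape]

end Conjugate

section Lhd

variable {S T : FB n}

lemma insert_root_image_conj (A : Set Cell) :
    insert (root n) (conj n '' A) = conj n '' insert (root n) A := by
  rw [Set.image_insert_eq, conj_root]

lemma colSp_conjFB (T : FB n) : ColSp (conjFB T) = conj n '' RowSp T := by
  have hR : insert (root n) (leftArrows T) ⊆ shape n :=
    Set.insert_subset (T.isCell_of_mem _ T.root_mem) (leftArrows_subset_shape T)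
  rw [colSp_eq, rowSp_eq, upArrows_conjFB, insert_root_image_conj]
  refine eq_image_conj (fun _ h => h.1) (fun _ h => h.1) fun c hc => ?_
  simp only [Set.mem_ofPred_eq, conj_mem_image_conj_iff hR hc, hasAbove_image_conj hR hc, hc,
    hc.conj, true_and]

lemma rowSp_conjFB (T : FB n) : RowSp (conjFB T) = conj n '' ColSp T := by
  have hU : insert (root n) (upArrows T) ⊆ shape n :=
    Set.insert_subset (T.isCell_of_mem _ T.root_mem) (upArrows_subset_shape T)
  rw [colSp_eq, rowSp_eq, leftArrows_conjFB, insert_root_image_conj]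
  refine eq_image_conj (fun _ h => h.1) (fun _ h => h.1) fun c hc => ?_
  simp only [Set.mem_ofPred_eq, conj_mem_image_conj_iff hU hc, hasLeft_image_conj hU hc, hc,
    hc.conj, true_and]

lemma colSp_subset_shape (T : FB n) : ColSp T ⊆ shape n := fun _ h => h.1

lemma rowSp_subset_shape (T : FB n) : RowSp T ⊆ shape n := fun _ h => h.1

/-- Border cells lie in every fb-tableau, and elsewhere toggling complements membership. -/
lemma mem_symmDiff_toggled_imp_iff (hT : IsFree T c) (hS : IsFree S c) :
    (c ∈ T.cells ∆ toggled T → c ∈ S.cells ∆ toggled S) ↔ (c ∈ S.cells → c ∈ T.cells) := by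
  by_cases hb : IsBorder n c
  · simp only [mem_symmDiff_toggled_of_isBorder hb, T.border_mem c hb, imp_true_iff]
  · rw [mem_symmDiff_toggled_iff_not_mem hT hb, mem_symmDiff_toggled_iff_not_mem hS hb,
      not_imp_not]

lemma forall_isFree_conjFB_iff :
    (∀ d, IsFree (conjFB T) d → IsFree (conjFB S) d → d ∈ (conjFB T).cells →
      d ∈ (conjFB S).cells) ↔
    ∀ c, IsFree S c → IsFree T c → c ∈ S.cells → c ∈ T.cells := by
  constructor
  · intro h c hS hT
    rw [← mem_symmDiff_toggled_imp_iff hT hS, ← conj_mem_conjFB_iff hS.1,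
      ← conj_mem_conjFB_iff hS.1]
    exact h _ ((isFree_conjFB_conj_iff hS.1).2 hT) ((isFree_conjFB_conj_iff hS.1).2 hS)
  · intro h d hT hS
    obtain ⟨c, hc, rfl⟩ : ∃ c, IsCell n c ∧ conj n c = d := ⟨conj n d, hT.1.conj, conj_conj hT.1⟩
    rw [isFree_conjFB_conj_iff hc] at hT hS
    rw [conj_mem_conjFB_iff hc, conj_mem_conjFB_iff hc, mem_symmDiff_toggled_imp_iff hT hS]
    exact h c hS hT

lemma lhd_conjFB_iff : Lhd (conjFB T) (conjFB S) ↔ Lhd S T := by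
  simp only [Lhd, colSp_conjFB, rowSp_conjFB, forall_isFree_conjFB_iff,
    injOn_conj.image_subset_image_iff (rowSp_subset_shape _) (rowSp_subset_shape _),
    injOn_conj.image_subset_image_iff (colSp_subset_shape _) (colSp_subset_shape _)]
  exact and_left_comm

end Lhd

theorem conj_involution_selfdual_general (n : ℕ) :
    (∀ T : FB n, ∃ T' : FB n, T'.cells = conjCells n T) ∧
    (∀ T T' : FB n, T'.cells = conjCells n T → conjCells n T' = T.cells) ∧
    (∀ S T S' T' : FB n, S'.cells = conjCells n S → T'.cells = conjCells n T →
      (Lhd S T ↔ Lhd T' S')) := by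
  refine ⟨fun T => ⟨conjFB T, rfl⟩, fun T T' hT => ?_, fun S T S' T' hS hT => ?_⟩
  · obtain rfl : T' = conjFB T := FB.ext hT
    exact conjCells_conjFB T
  · obtain rfl : S' = conjFB S := FB.ext hS
    obtain rfl : T' = conjFB T := FB.ext hT
    exact lhd_conjFB_iff.symm

/-- the conjugate of an fb-tableau is an fb-tableau, conjugation is an
involution, and `S ⊲ T ↔ T' ⊲ S'`; in particular `esTam n` is self-dual. -/
theorem conj_involution_selfdual (n : ℕ) (hn : 1 ≤ n) :
    (∀ T : FB n, ∃ T' : FB n, T'.cells = conjCells n T) ∧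
    (∀ T T' : FB n, T'.cells = conjCells n T → conjCells n T' = T.cells) ∧
    (∀ S T S' T' : FB n, S'.cells = conjCells n S → T'.cells = conjCells n T →
      (Lhd S T ↔ Lhd T' S')) :=
  conj_involution_selfdual_general n

end EsTam
end

section
/- The induced subposet of (esTam_n, ⊲) on the set of binary fb-tableaux of size n is order-isomorphic to the poset of bracket vectors of length n−1 ordered componentwise (that is, to the Tamari lattice). -/
open scoped Classical

namespace EsTam

/-- `a` is a bracket vector of length `n - 1` (encoded as a function `ℕ → ℕ`
vanishing outside `{1, …, n-1}`; in particular the convention `a n = 0` holds):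
`0 ≤ a i ≤ n - i` for `1 ≤ i ≤ n - 1`, and `j + a (i + j) ≤ a i` for all
`1 ≤ j ≤ a i`. -/
def IsBracket (n : ℕ) (a : ℕ → ℕ) : Prop :=
  (∀ i, (i = 0 ∨ n - 1 < i) → a i = 0) ∧
  (∀ i, 1 ≤ i → i ≤ n - 1 → a i ≤ n - i) ∧
  (∀ i j, 1 ≤ i → i ≤ n - 1 → 1 ≤ j → j ≤ a i → j + a (i + j) ≤ a i)


/-!
In a binary fb-tableau every dot other than the root is an arrow, and the tableau is determined
by the rows `μ j` of its up-arrows: the left-arrow of row `i` is the dot of row `i` in the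
rightmost column `j ≥ i - 1` whose up-arrow lies above row `i` (or the dot in column `n`).
Having no free cells amounts to the nesting condition `μ p ≤ q + 1 → μ p ≤ μ q` for `q < p`,
which is the bracket-vector condition for `a_k = n - k + 1 - μ (n - k)`. Conversely every bracket
vector arises this way. For binary tableaux the free-cell clause of `⊲` is vacuous and
`Row T ⊆ Row S` follows from `Col S ⊆ Col T`, which says `μ_T ≤ μ_S`, i.e. `a_S ≤ a_T`.
-/

variable {n : ℕ}

namespace FB

lemma ext_cells {S T : FB n} (h : S.cells = T.cells) : S = T := by
  cases S; cases T; congr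

lemma mem_border (T : FB n) {i : ℕ} (h2 : 2 ≤ i) (hi : i ≤ n) :
    ((i, i - 1) : Cell) ∈ T.cells :=
  T.border_mem _ ⟨h2, hi, rfl⟩

/- `T.upRow j` is the row of the up-arrow of column `j` and `T.leftCol i` the column of the
left-arrow of row `i`; they are junk outside `1 ≤ j ≤ n - 1`, resp. `2 ≤ i ≤ n`. -/

noncomputable def upRow (T : FB n) (j : ℕ) : ℕ := sInf {i | ((i, j) : Cell) ∈ T.cells}

noncomputable def leftCol (T : FB n) (i : ℕ) : ℕ := sSup {j | ((i, j) : Cell) ∈ T.cells}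

section upRow

variable (T : FB n) {i j : ℕ}

lemma upRow_le (h : ((i, j) : Cell) ∈ T.cells) : T.upRow j ≤ i :=
  Nat.sInf_le h

lemma upRow_le_succ (h1 : 1 ≤ j) (h2 : j ≤ n - 1) : T.upRow j ≤ j + 1 :=
  T.upRow_le (by simpa using T.mem_border (i := j + 1) (by omega) (by omega))

lemma upRow_mem (h1 : 1 ≤ j) (h2 : j ≤ n - 1) : ((T.upRow j, j) : Cell) ∈ T.cells :=
  Nat.sInf_mem (s := {i | ((i, j) : Cell) ∈ T.cells})
    ⟨j + 1, by simpa using T.mem_border (i := j + 1) (by omega) (by omega)⟩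

lemma one_le_upRow (h1 : 1 ≤ j) (h2 : j ≤ n - 1) : 1 ≤ T.upRow j :=
  (T.isCell_of_mem _ (T.upRow_mem h1 h2)).1

lemma isUpArrow_iff : IsUpArrow T (i, j) ↔ 1 ≤ j ∧ j ≤ n - 1 ∧ i = T.upRow j := by
  constructor
  · rintro ⟨hmem, hroot, habove⟩
    obtain ⟨hi1, -, hj1, hjn, -⟩ := T.isCell_of_mem _ hmem
    have hj : j ≠ n := by
      rintro rfl
      rcases hi1.eq_or_lt with rfl | hi
      · exact hroot rfl
      · exact habove 1 hi T.root_mem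
    refine ⟨hj1, by omega, (T.upRow_le hmem).antisymm' ?_⟩
    by_contra! hlt
    exact habove _ hlt (T.upRow_mem hj1 (by omega))
  · rintro ⟨hj1, hjn, rfl⟩
    refine ⟨T.upRow_mem hj1 hjn, fun h => ?_, fun i' hi' => Nat.notMem_of_lt_sInf hi'⟩
    simp only [root, Prod.mk.injEq] at h
    omega

end upRow

section leftCol

variable (T : FB n) {i j : ℕ}

lemma bddAbove_row (i : ℕ) : BddAbove {j | ((i, j) : Cell) ∈ T.cells} :=
  ⟨n, fun _ hj => (T.isCell_of_mem _ hj).2.2.2.1⟩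

lemma le_leftCol (h : ((i, j) : Cell) ∈ T.cells) : j ≤ T.leftCol i :=
  le_csSup (T.bddAbove_row i) h

lemma sub_one_le_leftCol (h2 : 2 ≤ i) (hi : i ≤ n) : i - 1 ≤ T.leftCol i :=
  T.le_leftCol (T.mem_border h2 hi)

lemma leftCol_mem (h2 : 2 ≤ i) (hi : i ≤ n) : ((i, T.leftCol i) : Cell) ∈ T.cells :=
  Nat.sSup_mem ⟨_, T.mem_border h2 hi⟩ (T.bddAbove_row i)

lemma leftCol_le (h2 : 2 ≤ i) (hi : i ≤ n) : T.leftCol i ≤ n :=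
  (T.isCell_of_mem _ (T.leftCol_mem h2 hi)).2.2.2.1

lemma isLeftArrow_iff : IsLeftArrow T (i, j) ↔ 2 ≤ i ∧ i ≤ n ∧ j = T.leftCol i := by
  constructor
  · rintro ⟨hmem, hroot, hleft⟩
    obtain ⟨hi1, hin, -, hjn, -⟩ := T.isCell_of_mem _ hmem
    have hi : i ≠ 1 := by
      rintro rfl
      rcases hjn.eq_or_lt with rfl | hj
      · exact hroot rfl
      · exact hleft n hj T.root_mem
    refine ⟨by omega, hin, (T.le_leftCol hmem).antisymm ?_⟩
    by_contra! hlt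
    exact hleft _ hlt (T.leftCol_mem (by omega) hin)
  · rintro ⟨hi2, hin, rfl⟩
    refine ⟨T.leftCol_mem hi2 hin, fun h => ?_, fun j' hj' hmem => ?_⟩
    · simp only [root, Prod.mk.injEq] at h
      omega
    · exact absurd (T.le_leftCol hmem) (not_le.mpr hj')

end leftCol

variable (T : FB n)

lemma mem_colSp_iff {c : Cell} : c ∈ ColSp T ↔ IsCell n c ∧ (c.2 = n ∨ T.upRow c.2 ≤ c.1) := by
  obtain ⟨i, j⟩ := c
  constructor
  · rintro ⟨hc, i', hi', hroot | hup⟩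
    · simp only [root, Prod.mk.injEq] at hroot
      exact ⟨hc, Or.inl hroot.2⟩
    · obtain ⟨-, -, rfl⟩ := (T.isUpArrow_iff).mp hup
      exact ⟨hc, Or.inr hi'⟩
  · rintro ⟨hc, hj | hle⟩
    · exact ⟨hc, 1, hc.1, Or.inl (Prod.ext rfl hj)⟩
    · obtain ⟨-, -, hj1, hjn, -⟩ := id hc
      rcases hjn.eq_or_lt with rfl | hj
      · exact ⟨hc, 1, hc.1, Or.inl rfl⟩
      · exact ⟨hc, _, hle, Or.inr ((T.isUpArrow_iff).mpr ⟨hj1, by omega, rfl⟩)⟩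

lemma mem_rowSp_iff {c : Cell} : c ∈ RowSp T ↔ IsCell n c ∧ (c.1 = 1 ∨ c.2 ≤ T.leftCol c.1) := by
  obtain ⟨i, j⟩ := c
  constructor
  · rintro ⟨hc, j', hj', hroot | hleft⟩
    · simp only [root, Prod.mk.injEq] at hroot
      exact ⟨hc, Or.inl hroot.1⟩
    · obtain ⟨-, -, rfl⟩ := (T.isLeftArrow_iff).mp hleft
      exact ⟨hc, Or.inr hj'⟩
  · rintro ⟨hc, hi | hle⟩
    · exact ⟨hc, n, hc.2.2.2.1, Or.inl (Prod.ext hi rfl)⟩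
    · obtain ⟨hi1, hin, -, -, -⟩ := id hc
      rcases hi1.eq_or_lt with rfl | hi
      · exact ⟨hc, n, hc.2.2.2.1, Or.inl rfl⟩
      · exact ⟨hc, _, hle, Or.inr ((T.isLeftArrow_iff).mpr ⟨hi, hin, rfl⟩)⟩

lemma colSp_subset_iff {S : FB n} :
    ColSp S ⊆ ColSp T ↔ ∀ j, 1 ≤ j → j ≤ n - 1 → T.upRow j ≤ S.upRow j := by
  constructor
  · intro h j h1 h2
    have hS : ((S.upRow j, j) : Cell) ∈ ColSp S :=
      (S.mem_colSp_iff).mpr ⟨S.isCell_of_mem _ (S.upRow_mem h1 h2), Or.inr le_rfl⟩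
    obtain ⟨-, hj | hle⟩ := (T.mem_colSp_iff).mp (h hS)
    · simp only at hj
      omega
    · exact hle
  · intro h c hc
    obtain ⟨hc, hj | hle⟩ := (S.mem_colSp_iff).mp hc
    · exact (T.mem_colSp_iff).mpr ⟨hc, Or.inl hj⟩
    · rcases hc.2.2.2.1.eq_or_lt with hj | hj
      · exact (T.mem_colSp_iff).mpr ⟨hc, Or.inl hj⟩
      · exact (T.mem_colSp_iff).mpr ⟨hc, Or.inr ((h _ hc.2.2.1 (by omega)).trans hle)⟩

lemma rowSp_subset_of_leftCol_le {S : FB n}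
    (h : ∀ i, 2 ≤ i → i ≤ n → T.leftCol i ≤ S.leftCol i) : RowSp T ⊆ RowSp S := by
  intro c hc
  obtain ⟨hc, hi | hle⟩ := (T.mem_rowSp_iff).mp hc
  · exact (S.mem_rowSp_iff).mpr ⟨hc, Or.inl hi⟩
  · rcases hc.1.eq_or_lt with hi | hi
    · exact (S.mem_rowSp_iff).mpr ⟨hc, Or.inl hi.symm⟩
    · exact (S.mem_rowSp_iff).mpr ⟨hc, Or.inr (hle.trans (h _ hi hc.2.1))⟩

lemma isFree_iff {i j : ℕ} : IsFree T (i, j) ↔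
    IsCell n (i, j) ∧ j ≤ n - 1 ∧ 2 ≤ i ∧ T.upRow j < i ∧ j < T.leftCol i := by
  constructor
  · rintro ⟨hc, ⟨i', hi', hup⟩, ⟨j', hj', hleft⟩⟩
    obtain ⟨-, hjn, rfl⟩ := (T.isUpArrow_iff).mp hup
    obtain ⟨hi2, -, rfl⟩ := (T.isLeftArrow_iff).mp hleft
    exact ⟨hc, hjn, hi2, hi', hj'⟩
  · rintro ⟨hc, hjn, hi2, hup, hleft⟩
    exact ⟨hc, ⟨_, hup, (T.isUpArrow_iff).mpr ⟨hc.2.2.1, hjn, rfl⟩⟩,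
      ⟨_, hleft, (T.isLeftArrow_iff).mpr ⟨hi2, hc.2.1, rfl⟩⟩⟩

/-- A left-arrow has no dot to its left, so it is supported from above. -/
lemma leftCol_eq_or_upRow_leftCol_lt {i : ℕ} (h2 : 2 ≤ i) (hi : i ≤ n) :
    T.leftCol i = n ∨ (T.leftCol i ≤ n - 1 ∧ T.upRow (T.leftCol i) < i) := by
  rcases (T.leftCol_le h2 hi).eq_or_lt with he | hlt
  · exact Or.inl he
  · refine Or.inr ⟨by omega, ?_⟩
    have hleft := (T.isLeftArrow_iff).mpr ⟨h2, hi, rfl⟩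
    rcases T.supported _ hleft.1 hleft.2.1 with ⟨j', hj', hmem⟩ | ⟨i', hi', hmem⟩
    · exact absurd hmem (hleft.2.2 j' hj')
    · exact (T.upRow_le hmem).trans_lt hi'

end FB

namespace IsBinary

variable {T : FB n} (hT : IsBinary T)
include hT

lemma le_upRow_of_lt_leftCol {i j : ℕ} (h2 : 2 ≤ i) (hi : i ≤ n) (hij : i - 1 ≤ j)
    (hj : j < T.leftCol i) (hjn : j ≤ n - 1) : i ≤ T.upRow j := by
  by_contra! hlt
  exact hT _ ((T.isFree_iff).mpr ⟨⟨by omega, hi, by omega, by omega, Or.inr hij⟩, hjn, h2, hlt, hj⟩)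

/-- Otherwise the cell `(T.upRow p, q)` would be free. -/
lemma upRow_le_upRow {p q : ℕ} (hq : 1 ≤ q) (hqp : q < p) (hp : p ≤ n - 1)
    (h : T.upRow p ≤ q + 1) : T.upRow p ≤ T.upRow q := by
  by_contra! hlt
  have hq1 := T.one_le_upRow hq (by omega)
  have hp1 := T.upRow_le_succ (j := p) (by omega) hp
  exact hT _ ((T.isFree_iff).mpr ⟨⟨by omega, by omega, hq, by omega, Or.inr (by omega)⟩,
    by omega, by omega, hlt, hqp.trans_le (T.le_leftCol (T.upRow_mem (by omega) hp))⟩)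

lemma mem_cells_iff {c : Cell} : c ∈ T.cells ↔ c = root n ∨
    (1 ≤ c.2 ∧ c.2 ≤ n - 1 ∧ c.1 = T.upRow c.2) ∨ (2 ≤ c.1 ∧ c.1 ≤ n ∧ c.2 = T.leftCol c.1) := by
  obtain ⟨i, j⟩ := c
  dsimp only
  constructor
  · intro h
    obtain ⟨hi1, hin, hj1, hjn, -⟩ : 1 ≤ i ∧ i ≤ n ∧ 1 ≤ j ∧ j ≤ n ∧ _ := T.isCell_of_mem _ h
    have hup : T.upRow j ≤ i := T.upRow_le h
    have hleft : j ≤ T.leftCol i := T.le_leftCol h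
    rcases hi1.eq_or_lt with rfl | hi2
    · rcases hjn.eq_or_lt with rfl | hj
      · exact Or.inl rfl
      · exact Or.inr (Or.inl ⟨hj1, by omega, (T.one_le_upRow hj1 (by omega)).antisymm hup⟩)
    rcases hleft.eq_or_lt with hj | hj
    · exact Or.inr (Or.inr ⟨hi2, hin, hj⟩)
    have hjn' : j ≤ n - 1 := by have := T.leftCol_le hi2 hin; omega
    rcases hup.eq_or_lt with hi | hi
    · exact Or.inr (Or.inl ⟨hj1, hjn', hi.symm⟩)
    · exact (hT _ ((T.isFree_iff).mpr ⟨T.isCell_of_mem _ h, hjn', hi2, hi, hj⟩)).elim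
  · rintro (h | ⟨h1, h2, rfl⟩ | ⟨h1, h2, rfl⟩)
    · exact h ▸ T.root_mem
    · exact T.upRow_mem h1 h2
    · exact T.leftCol_mem h1 h2

lemma leftCol_le_leftCol {S : FB n} (h : ∀ j, 1 ≤ j → j ≤ n - 1 → T.upRow j ≤ S.upRow j)
    {i : ℕ} (h2 : 2 ≤ i) (hi : i ≤ n) : T.leftCol i ≤ S.leftCol i := by
  by_contra! hlt
  have hS := S.sub_one_le_leftCol h2 hi
  rcases S.leftCol_eq_or_upRow_leftCol_lt h2 hi with he | ⟨hSn, hup⟩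
  · have := T.leftCol_le h2 hi
    omega
  · have := hT.le_upRow_of_lt_leftCol h2 hi hS hlt hSn
    have := h _ (by omega) hSn
    omega

end IsBinary

lemma IsBinary.eq_of_upRow_eq {S T : FB n} (hS : IsBinary S) (hT : IsBinary T)
    (h : ∀ j, 1 ≤ j → j ≤ n - 1 → S.upRow j = T.upRow j) : S = T := by
  have hleft : ∀ i, 2 ≤ i → i ≤ n → S.leftCol i = T.leftCol i := fun i h2 hi =>
    (hS.leftCol_le_leftCol (fun j h1 hj => (h j h1 hj).le) h2 hi).antisymm
      (hT.leftCol_le_leftCol (fun j h1 hj => (h j h1 hj).ge) h2 hi)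
  refine FB.ext_cells (Set.ext fun c => ?_)
  rw [hS.mem_cells_iff, hT.mem_cells_iff]
  exact or_congr_right (or_congr
    (and_congr_right fun h1 => and_congr_right fun h2 => by rw [h _ h1 h2])
    (and_congr_right fun h2 => and_congr_right fun hi => by rw [hleft _ h2 hi]))

lemma IsBinary.lhd_iff {S T : FB n} (hS : IsBinary S) (hT : IsBinary T) :
    Lhd S T ↔ ∀ j, 1 ≤ j → j ≤ n - 1 → T.upRow j ≤ S.upRow j :=
  ⟨fun h => (T.colSp_subset_iff).mp h.1, fun h => ⟨(T.colSp_subset_iff).mpr h,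
    T.rowSp_subset_of_leftCol_le (fun _ h2 hi => hT.leftCol_le_leftCol h h2 hi),
    fun c hc => (hS c hc).elim⟩⟩

/-- `a_k` is the height of the up-arrow of column `n - k` above the border cell
`(n - k + 1, n - k)`. -/
noncomputable def FB.bracketVector (T : FB n) (k : ℕ) : ℕ :=
  if 1 ≤ k ∧ k ≤ n - 1 then n - k + 1 - T.upRow (n - k) else 0

lemma FB.bracketVector_add_upRow (T : FB n) {k : ℕ} (h1 : 1 ≤ k) (h2 : k ≤ n - 1) :
    T.bracketVector k + T.upRow (n - k) = n - k + 1 := by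
  have := T.upRow_le_succ (j := n - k) (by omega) (by omega)
  rw [FB.bracketVector, if_pos ⟨h1, h2⟩]
  omega

lemma FB.bracketVector_le_iff {S T : FB n} :
    (∀ k, S.bracketVector k ≤ T.bracketVector k) ↔
      ∀ j, 1 ≤ j → j ≤ n - 1 → T.upRow j ≤ S.upRow j := by
  constructor
  · intro h j h1 h2
    have hS := S.bracketVector_add_upRow (k := n - j) (by omega) (by omega)
    have hT := T.bracketVector_add_upRow (k := n - j) (by omega) (by omega)
    have := h (n - j)
    rw [Nat.sub_sub_self (by omega)] at hS hT
    omega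
  · intro h k
    by_cases hk : 1 ≤ k ∧ k ≤ n - 1
    · have := S.bracketVector_add_upRow hk.1 hk.2
      have := T.bracketVector_add_upRow hk.1 hk.2
      have := h (n - k) (by omega) (by omega)
      omega
    · simp [FB.bracketVector, if_neg hk]

lemma IsBinary.isBracket_bracketVector {T : FB n} (hT : IsBinary T) :
    IsBracket n T.bracketVector := by
  have hzero : ∀ k, (k = 0 ∨ n - 1 < k) → T.bracketVector k = 0 := fun k hk => if_neg (by omega)
  refine ⟨hzero, fun k h1 h2 => ?_, fun k m h1 h2 hm hmk => ?_⟩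
  · have := T.bracketVector_add_upRow h1 h2
    have := T.one_le_upRow (j := n - k) (by omega) (by omega)
    omega
  · have := T.bracketVector_add_upRow h1 h2
    by_cases hkm : k + m ≤ n - 1
    · have := T.bracketVector_add_upRow (by omega) hkm
      have := hT.upRow_le_upRow (p := n - k) (q := n - (k + m)) (by omega) (by omega) (by omega)
        (by omega)
      omega
    · rw [hzero (k + m) (by omega)]
      omega

lemma IsBinary.eq_of_bracketVector_eq {S T : FB n} (hS : IsBinary S) (hT : IsBinary T)
    (h : S.bracketVector = T.bracketVector) : S = T :=
  hS.eq_of_upRow_eq hT fun j h1 h2 =>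
    (FB.bracketVector_le_iff.mp (fun k => (congrFun h k).ge) j h1 h2).antisymm
      (FB.bracketVector_le_iff.mp (fun k => (congrFun h k).le) j h1 h2)

section bracketCells

variable {a : ℕ → ℕ}

def bracketUpRow (n : ℕ) (a : ℕ → ℕ) (j : ℕ) : ℕ := j + 1 - a (n - j)

/-- The left-arrow of row `i` sits in the rightmost column `j ≥ i - 1` whose up-arrow lies
strictly above row `i`, and in column `n` if there is none. -/
noncomputable def bracketLeftCol (n : ℕ) (a : ℕ → ℕ) (i : ℕ) : ℕ :=
  sInf {j | j = n ∨ (i - 1 ≤ j ∧ 1 ≤ j ∧ j ≤ n - 1 ∧ bracketUpRow n a j < i)}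

def bracketCells (n : ℕ) (a : ℕ → ℕ) : Set Cell :=
  {c | c = root n ∨ (1 ≤ c.2 ∧ c.2 ≤ n - 1 ∧ c.1 = bracketUpRow n a c.2) ∨
    (2 ≤ c.1 ∧ c.1 ≤ n ∧ c.2 = bracketLeftCol n a c.1)}

lemma one_le_bracketUpRow (ha : IsBracket n a) {j : ℕ} (h1 : 1 ≤ j) (h2 : j ≤ n - 1) :
    1 ≤ bracketUpRow n a j := by
  have := ha.2.1 (n - j) (by omega) (by omega)
  unfold bracketUpRow
  omega

lemma bracketUpRow_le_bracketUpRow (ha : IsBracket n a) {p q : ℕ} (hq : 1 ≤ q) (hqp : q < p)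
    (hp : p ≤ n - 1) (h : bracketUpRow n a p ≤ q + 1) :
    bracketUpRow n a p ≤ bracketUpRow n a q := by
  unfold bracketUpRow at h ⊢
  have hap := ha.2.1 (n - p) (by omega) (by omega)
  have hnest := ha.2.2 (n - p) (p - q) (by omega) (by omega) (by omega) (by omega)
  rw [show n - p + (p - q) = n - q by omega] at hnest
  omega

lemma bracketLeftCol_spec (n : ℕ) (a : ℕ → ℕ) (i : ℕ) :
    bracketLeftCol n a i = n ∨ (i - 1 ≤ bracketLeftCol n a i ∧ 1 ≤ bracketLeftCol n a i ∧
      bracketLeftCol n a i ≤ n - 1 ∧ bracketUpRow n a (bracketLeftCol n a i) < i) :=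
  Nat.sInf_mem (s := {j | j = n ∨ (i - 1 ≤ j ∧ 1 ≤ j ∧ j ≤ n - 1 ∧ bracketUpRow n a j < i)})
    ⟨n, Or.inl rfl⟩

lemma bracketLeftCol_le_n (n : ℕ) (a : ℕ → ℕ) (i : ℕ) : bracketLeftCol n a i ≤ n :=
  Nat.sInf_le (Or.inl rfl)

lemma bracketLeftCol_le {i j : ℕ} (hij : i - 1 ≤ j) (h1 : 1 ≤ j) (h2 : j ≤ n - 1)
    (h : bracketUpRow n a j < i) : bracketLeftCol n a i ≤ j :=
  Nat.sInf_le (Or.inr ⟨hij, h1, h2, h⟩)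

lemma sub_one_le_bracketLeftCol {i : ℕ} (hi : i ≤ n) : i - 1 ≤ bracketLeftCol n a i := by
  rcases bracketLeftCol_spec n a i with h | h
  · omega
  · exact h.1

lemma lt_bracketLeftCol_bracketUpRow (ha : IsBracket n a) {j : ℕ} (h1 : 1 ≤ j) (h2 : j ≤ n - 1) :
    j < bracketLeftCol n a (bracketUpRow n a j) := by
  rcases bracketLeftCol_spec n a (bracketUpRow n a j) with h | ⟨hl, hl1, -, hlt⟩
  · omega
  by_contra! hle
  rcases hle.eq_or_lt with he | hlt'
  · rw [he] at hlt
    exact hlt.false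
  · have := bracketUpRow_le_bracketUpRow ha hl1 hlt' h2 (by omega)
    omega

lemma bracketUpRow_le_of_mem {i j : ℕ} (h : ((i, j) : Cell) ∈ bracketCells n a)
    (hj : j ≤ n - 1) : bracketUpRow n a j ≤ i := by
  simp only [bracketCells, Set.mem_ofPred_eq, root, Prod.mk.injEq] at h
  rcases h with ⟨rfl, rfl⟩ | ⟨-, -, rfl⟩ | ⟨hi, -, rfl⟩
  · unfold bracketUpRow
    omega
  · exact le_rfl
  · rcases bracketLeftCol_spec n a i with he | ⟨-, -, -, hlt⟩
    · unfold bracketUpRow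
      omega
    · exact hlt.le

lemma le_bracketLeftCol_of_mem (ha : IsBracket n a) {i j : ℕ}
    (h : ((i, j) : Cell) ∈ bracketCells n a) (hi : 2 ≤ i) : j ≤ bracketLeftCol n a i := by
  simp only [bracketCells, Set.mem_ofPred_eq, root, Prod.mk.injEq] at h
  rcases h with ⟨rfl, -⟩ | ⟨h1, h2, rfl⟩ | ⟨-, -, rfl⟩
  · omega
  · exact (lt_bracketLeftCol_bracketUpRow ha h1 h2).le
  · exact le_rfl

lemma isCell_of_mem_bracketCells (ha : IsBracket n a) (hn : 1 ≤ n) {c : Cell}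
    (h : c ∈ bracketCells n a) : IsCell n c := by
  obtain ⟨i, j⟩ := c
  simp only [bracketCells, Set.mem_ofPred_eq, root, Prod.mk.injEq] at h
  rcases h with ⟨rfl, rfl⟩ | ⟨h1, h2, rfl⟩ | ⟨h1, h2, rfl⟩
  · exact ⟨le_rfl, hn, hn, le_rfl, Or.inl (by omega)⟩
  · have := one_le_bracketUpRow ha h1 h2
    have : bracketUpRow n a j ≤ j + 1 := Nat.sub_le _ _
    exact ⟨by omega, by omega, h1, by omega, Or.inr (by omega)⟩
  · have hle := bracketLeftCol_le_n n a i
    have hge := sub_one_le_bracketLeftCol (a := a) h2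
    exact ⟨by omega, h2, by omega, hle, Or.inr hge⟩

lemma border_mem_bracketCells {c : Cell} (h : IsBorder n c) : c ∈ bracketCells n a := by
  obtain ⟨i, j⟩ := c
  obtain ⟨h2, hi, rfl⟩ : 2 ≤ i ∧ i ≤ n ∧ j = i - 1 := h
  rcases (sub_one_le_bracketLeftCol (a := a) hi).eq_or_lt with he | hlt
  · exact Or.inr (Or.inr ⟨h2, hi, he⟩)
  · have hge : i ≤ bracketUpRow n a (i - 1) := by
      by_contra! hup
      exact (bracketLeftCol_le le_rfl (by omega) (by omega) hup).not_gt hlt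
    have : bracketUpRow n a (i - 1) ≤ i - 1 + 1 := Nat.sub_le _ _
    exact Or.inr (Or.inl ⟨(by omega : 1 ≤ i - 1), (by omega : i - 1 ≤ n - 1),
      (by omega : i = bracketUpRow n a (i - 1))⟩)

lemma supported_bracketCells (ha : IsBracket n a) {c : Cell} (h : c ∈ bracketCells n a)
    (hroot : c ≠ root n) :
    (∃ j', c.2 < j' ∧ ((c.1, j') : Cell) ∈ bracketCells n a) ∨
      (∃ i', i' < c.1 ∧ ((i', c.2) : Cell) ∈ bracketCells n a) := by
  obtain ⟨i, j⟩ := c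
  rcases h with h | ⟨h1, h2, hi⟩ | ⟨h2, hi, hj⟩
  · exact (hroot h).elim
  · simp only at h1 h2 hi
    subst hi
    left
    rcases (one_le_bracketUpRow ha h1 h2).eq_or_lt with he | hlt
    · exact ⟨n, by omega, Or.inl (by rw [← he]; rfl)⟩
    · have : bracketUpRow n a j ≤ j + 1 := Nat.sub_le _ _
      exact ⟨_, lt_bracketLeftCol_bracketUpRow ha h1 h2, Or.inr (Or.inr ⟨hlt, by omega, rfl⟩)⟩
  · simp only at h2 hi hj
    subst hj
    right
    rcases bracketLeftCol_spec n a i with he | ⟨-, hl1, hln, hlt⟩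
    · exact ⟨1, by omega, Or.inl (by rw [he]; rfl)⟩
    · exact ⟨_, hlt, Or.inr (Or.inl ⟨hl1, hln, rfl⟩)⟩

noncomputable def FB.ofBracket (ha : IsBracket n a) (hn : 1 ≤ n) : FB n where
  cells := bracketCells n a
  isCell_of_mem _ := isCell_of_mem_bracketCells ha hn
  root_mem := Or.inl rfl
  border_mem _ := border_mem_bracketCells
  supported _ := supported_bracketCells ha

end bracketCells

section ofBracket

variable {a : ℕ → ℕ} (ha : IsBracket n a) (hn : 1 ≤ n)

lemma FB.upRow_ofBracket {j : ℕ} (h1 : 1 ≤ j) (h2 : j ≤ n - 1) :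
    (FB.ofBracket ha hn).upRow j = bracketUpRow n a j :=
  ((FB.ofBracket ha hn).upRow_le (Or.inr (Or.inl ⟨h1, h2, rfl⟩))).antisymm
    (bracketUpRow_le_of_mem ((FB.ofBracket ha hn).upRow_mem h1 h2) h2)

lemma FB.leftCol_ofBracket {i : ℕ} (h2 : 2 ≤ i) (hi : i ≤ n) :
    (FB.ofBracket ha hn).leftCol i = bracketLeftCol n a i :=
  (le_bracketLeftCol_of_mem ha ((FB.ofBracket ha hn).leftCol_mem h2 hi) h2).antisymm
    ((FB.ofBracket ha hn).le_leftCol (Or.inr (Or.inr ⟨h2, hi, rfl⟩)))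

lemma FB.isBinary_ofBracket : IsBinary (FB.ofBracket ha hn) := by
  rintro ⟨i, j⟩ hfree
  obtain ⟨hc, hjn, hi2, hup, hleft⟩ := (FB.isFree_iff _).mp hfree
  obtain ⟨-, hi, hj1, -, hshape⟩ := hc
  rw [FB.upRow_ofBracket ha hn hj1 hjn] at hup
  rw [FB.leftCol_ofBracket ha hn hi2 hi] at hleft
  exact (bracketLeftCol_le (by omega) hj1 hjn hup).not_gt hleft

lemma FB.bracketVector_ofBracket : (FB.ofBracket ha hn).bracketVector = a := by
  funext k
  by_cases hk : 1 ≤ k ∧ k ≤ n - 1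
  · have hsum := (FB.ofBracket ha hn).bracketVector_add_upRow hk.1 hk.2
    rw [FB.upRow_ofBracket ha hn (by omega) (by omega), bracketUpRow,
      Nat.sub_sub_self (by omega)] at hsum
    have := ha.2.1 k hk.1 hk.2
    omega
  · rw [ha.1 k (by omega)]
    exact if_neg hk

end ofBracket

/-- the induced subposet of `(esTam n, ⊲)` on binary fb-tableaux is
order-isomorphic to the poset of bracket vectors of length `n - 1` ordered
componentwise (the Tamari lattice). -/
theorem binary_iso_bracketVectors (n : ℕ) (hn : 1 ≤ n) :
    ∃ F : {T : FB n // IsBinary T} → {a : ℕ → ℕ // IsBracket n a},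
      Function.Bijective F ∧
      ∀ S T : {T : FB n // IsBinary T},
        (Lhd S.1 T.1 ↔ ∀ i, (F S).1 i ≤ (F T).1 i) := by
  refine ⟨fun T => ⟨T.1.bracketVector, T.2.isBracket_bracketVector⟩, ⟨?_, ?_⟩, ?_⟩
  · exact fun S T h => Subtype.ext (S.2.eq_of_bracketVector_eq T.2 (congrArg Subtype.val h))
  · exact fun ⟨a, ha⟩ => ⟨⟨FB.ofBracket ha hn, FB.isBinary_ofBracket ha hn⟩,
      Subtype.ext (FB.bracketVector_ofBracket ha hn)⟩
  · exact fun S T => (S.2.lhd_iff T.2).trans FB.bracketVector_le_iff.symm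

end EsTam
end

section
/- The relation T1 ~ T2 defined by ν_{T1} = ν_{T2} is a lattice congruence on esTam_n, and the map T ↦ ν_T induces a lattice isomorphism from the quotient lattice esTam_n/~ onto the product lattice [3]^{n−1}, where [3] is the three-element chain ↑ < • < ←. -/
/-!
Going up in `esTam n` can only move up-arrows higher in their columns and left-arrows further
right in their rows, so every border letter is monotone along `⊲`. Conversely, for every word `w`
there is a tableau with border word `w` lying below every tableau whose word dominates `w` (each
left-arrow not forced onto the border goes to column `n`, each such up-arrow as low as possible),
and dually one lying above every tableau whose word is dominated by `w`. Taking for `w` the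
pointwise minimum (maximum) of two words shows that `ν` sends meets to minima and joins to maxima;
the congruence property follows.
-/

open scoped Classical

namespace EsTam

/-- The `k`-th letter of the border word of `T` (for `1 ≤ k ≤ n - 1`), an element
of the three-element chain `↑ < • < ←` encoded as `Fin 3` with `↑ = 0`, `• = 1`
and `← = 2`: it records the content of the border cell `(k + 1, k)`. -/
noncomputable def nuLetter {n : ℕ} (T : FB n) (k : ℕ) : Fin 3 :=
  if IsUpArrow T (k + 1, k) then 0 else if IsLeftArrow T (k + 1, k) then 2 else 1

/-- The border word `ν_T` of `T`, as an element of the product `[3]^(n-1)`. -/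
noncomputable def nuMap {n : ℕ} (T : FB n) : Fin (n - 1) → Fin 3 :=
  fun k => nuLetter T (k.1 + 1)

variable {n : ℕ} {S T : FB n}

lemma mk_eq_root_iff {p q : ℕ} : ((p, q) : Cell) = root n ↔ p = 1 ∧ q = n := by
  simp [root]

lemma FB.mem_border_s6 (T : FB n) {k : ℕ} (hk : 1 ≤ k) (hkn : k < n) :
    ((k + 1, k) : Cell) ∈ T.cells :=
  T.border_mem _ ⟨by omega, hkn, by omega⟩

section Arrows

variable {i i' j j' p q : ℕ}

lemma IsUpArrow.le_of_mem (h : IsUpArrow T (i, q)) (hp : ((p, q) : Cell) ∈ T.cells) : i ≤ p :=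
  not_lt.1 fun hlt => h.2.2 p hlt hp

lemma IsLeftArrow.le_of_mem (h : IsLeftArrow T (p, j)) (hq : ((p, q) : Cell) ∈ T.cells) :
    q ≤ j :=
  not_lt.1 fun hlt => h.2.2 q hlt hq

lemma IsUpArrow.fst_eq (h : IsUpArrow T (i, q)) (h' : IsUpArrow T (i', q)) : i = i' :=
  le_antisymm (h.le_of_mem h'.1) (h'.le_of_mem h.1)

lemma IsLeftArrow.snd_eq (h : IsLeftArrow T (p, j)) (h' : IsLeftArrow T (p, j')) : j = j' :=
  le_antisymm (h'.le_of_mem h.1) (h.le_of_mem h'.1)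

lemma IsUpArrow.isUpArrow_iff (h : IsUpArrow T (i, q)) : IsUpArrow T (i', q) ↔ i' = i :=
  ⟨fun h' => h'.fst_eq h, fun e => e ▸ h⟩

lemma IsLeftArrow.isLeftArrow_iff (h : IsLeftArrow T (p, j)) :
    IsLeftArrow T (p, j') ↔ j' = j :=
  ⟨fun h' => h'.snd_eq h, fun e => e ▸ h⟩

lemma IsUpArrow.snd_lt (h : IsUpArrow T (i, q)) : q < n := by
  have hc := T.isCell_of_mem _ h.1
  refine lt_of_le_of_ne hc.2.2.2.1 fun hq => h.2.1 ?_
  subst hq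
  have := h.le_of_mem T.root_mem
  simp only [mk_eq_root_iff, and_true]
  exact le_antisymm this hc.1

lemma IsLeftArrow.two_le_fst (h : IsLeftArrow T (p, j)) : 2 ≤ p := by
  obtain ⟨hp, -, -, hjn, -⟩ := T.isCell_of_mem _ h.1
  by_contra hp2
  obtain rfl : p = 1 := by omega
  exact h.2.1 (mk_eq_root_iff.2 ⟨rfl, le_antisymm hjn (h.le_of_mem T.root_mem)⟩)

lemma IsUpArrow.fst_le (h : IsUpArrow T (i, q)) : i ≤ q + 1 :=
  h.le_of_mem (T.mem_border_s6 (T.isCell_of_mem _ h.1).2.2.1 h.snd_lt)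

lemma IsLeftArrow.pred_fst_le (h : IsLeftArrow T (p, j)) : p - 1 ≤ j :=
  h.le_of_mem (T.border_mem _ ⟨h.two_le_fst, (T.isCell_of_mem _ h.1).2.1, rfl⟩)

lemma IsLeftArrow.not_isUpArrow {c : Cell} (hl : IsLeftArrow T c) : ¬ IsUpArrow T c := fun hu =>
  (T.supported c hl.1 hl.2.1).elim (fun ⟨j', hj', hm⟩ => hl.2.2 j' hj' hm)
    fun ⟨i', hi', hm⟩ => hu.2.2 i' hi' hm

lemma FB.exists_isUpArrow (T : FB n) (hq : 1 ≤ q) (hqn : q < n) : ∃ i, IsUpArrow T (i, q) := by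
  have hex : ∃ p, ((p, q) : Cell) ∈ T.cells := ⟨q + 1, T.mem_border_s6 hq hqn⟩
  exact ⟨Nat.find hex, Nat.find_spec hex, by simp only [Ne, mk_eq_root_iff]; omega,
    fun i' hi' => Nat.find_min hex hi'⟩

lemma FB.exists_isLeftArrow (T : FB n) (hp : 2 ≤ p) (hpn : p ≤ n) :
    ∃ j, IsLeftArrow T (p, j) := by
  have hb : ((p, p - 1) : Cell) ∈ T.cells := T.border_mem _ ⟨hp, hpn, rfl⟩
  refine ⟨Nat.findGreatest (fun j => ((p, j) : Cell) ∈ T.cells) n,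
    Nat.findGreatest_spec (P := fun j => ((p, j) : Cell) ∈ T.cells) (by omega) hb,
    by simp only [Ne, mk_eq_root_iff]; omega,
    fun j' hj' hmem => Nat.findGreatest_is_greatest hj' (T.isCell_of_mem _ hmem).2.2.2.1 hmem⟩

end Arrows

section Lhd

variable {i i' j j' p q k : ℕ}

lemma Lhd.upArrow_le (h : Lhd S T) (hS : IsUpArrow S (i, q)) (hT : IsUpArrow T (i', q)) :
    i' ≤ i := by
  obtain ⟨-, i'', hi'', hroot | hup⟩ :=
    h.1 (show ((i, q) : Cell) ∈ ColSp S from ⟨S.isCell_of_mem _ hS.1, i, le_rfl, Or.inr hS⟩)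
  · exact absurd ((mk_eq_root_iff.1 hroot).2) hS.snd_lt.ne
  · exact (hT.fst_eq hup).le.trans hi''

lemma Lhd.leftArrow_le (h : Lhd S T) (hS : IsLeftArrow S (p, j)) (hT : IsLeftArrow T (p, j')) :
    j' ≤ j := by
  obtain ⟨-, j'', hj'', hroot | hleft⟩ :=
    h.2.1 (show ((p, j') : Cell) ∈ RowSp T from
      ⟨T.isCell_of_mem _ hT.1, j', le_rfl, Or.inr hT⟩)
  · exact absurd ((mk_eq_root_iff.1 hroot).1) (by have := hT.two_le_fst; omega)
  · exact hj''.trans (hleft.snd_eq hS).le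

lemma colSp_subset_colSp (h : ∀ i i' q, IsUpArrow S (i, q) → IsUpArrow T (i', q) → i' ≤ i) :
    ColSp S ⊆ ColSp T := by
  rintro ⟨a, b⟩ ⟨hc, i, hi, hroot | hup⟩
  · exact ⟨hc, i, hi, Or.inl hroot⟩
  · obtain ⟨i', hi'⟩ := T.exists_isUpArrow (S.isCell_of_mem _ hup.1).2.2.1 hup.snd_lt
    exact ⟨hc, i', (h _ _ _ hup hi').trans hi, Or.inr hi'⟩

lemma rowSp_subset_rowSp
    (h : ∀ p j j', IsLeftArrow S (p, j) → IsLeftArrow T (p, j') → j' ≤ j) :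
    RowSp T ⊆ RowSp S := by
  rintro ⟨a, b⟩ ⟨hc, j', hj', hroot | hleft⟩
  · exact ⟨hc, j', hj', Or.inl hroot⟩
  · obtain ⟨j, hj⟩ := S.exists_isLeftArrow hleft.two_le_fst (T.isCell_of_mem _ hleft.1).2.1
    exact ⟨hc, j, hj'.trans (h _ _ _ hj hleft), Or.inr hj⟩

lemma nuLetter_eq_zero_iff (T : FB n) (k : ℕ) : nuLetter T k = 0 ↔ IsUpArrow T (k + 1, k) := by
  unfold nuLetter
  split_ifs <;> simp_all

lemma nuLetter_eq_two_iff (T : FB n) (k : ℕ) :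
    nuLetter T k = 2 ↔ IsLeftArrow T (k + 1, k) := by
  unfold nuLetter
  split_ifs with hup <;> simp_all
  exact fun hl => hl.not_isUpArrow hup

lemma Lhd.isUpArrow_border (h : Lhd S T) (hk : 1 ≤ k) (hkn : k < n)
    (hT : IsUpArrow T (k + 1, k)) : IsUpArrow S (k + 1, k) := by
  obtain ⟨i, hi⟩ := S.exists_isUpArrow hk hkn
  rwa [← le_antisymm hi.fst_le (h.upArrow_le hi hT)]

lemma Lhd.isLeftArrow_border (h : Lhd S T) (hk : 1 ≤ k) (hkn : k < n)
    (hS : IsLeftArrow S (k + 1, k)) : IsLeftArrow T (k + 1, k) := by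
  obtain ⟨j, hj⟩ := T.exists_isLeftArrow (p := k + 1) (by omega) hkn
  rwa [le_antisymm (h.leftArrow_le hS hj) (by simpa using hj.pred_fst_le)] at hj

lemma Lhd.nuLetter_le (h : Lhd S T) (hk : 1 ≤ k) (hkn : k < n) :
    nuLetter S k ≤ nuLetter T k := by
  have h0 : nuLetter T k = 0 → nuLetter S k = 0 := by
    simpa only [nuLetter_eq_zero_iff] using h.isUpArrow_border hk hkn
  have h2 : nuLetter S k = 2 → nuLetter T k = 2 := by
    simpa only [nuLetter_eq_two_iff] using h.isLeftArrow_border hk hkn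
  omega

end Lhd

section Bottom

variable {w : ℕ → Fin 3} {i j k p q : ℕ}

/-- The nearest row weakly above row `k` whose left-arrow, according to `w`, is not forced onto
the border. -/
noncomputable def openRowAbove (w : ℕ → Fin 3) (k : ℕ) : ℕ :=
  Nat.findGreatest (fun i => i = 1 ∨ w (i - 1) ≠ 2) k

lemma openRowAbove_le (w : ℕ → Fin 3) (k : ℕ) : openRowAbove w k ≤ k :=
  Nat.findGreatest_le k

lemma one_le_openRowAbove (hk : 1 ≤ k) : 1 ≤ openRowAbove w k :=
  Nat.le_findGreatest hk (Or.inl rfl)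

lemma openRowAbove_spec (hk : 1 ≤ k) :
    openRowAbove w k = 1 ∨ w (openRowAbove w k - 1) ≠ 2 :=
  Nat.findGreatest_spec (P := fun i => i = 1 ∨ w (i - 1) ≠ 2) hk (Or.inl rfl)

lemma eq_two_of_openRowAbove_lt (h : openRowAbove w k < i) (hik : i ≤ k) : w (i - 1) = 2 := by
  have := Nat.findGreatest_is_greatest (P := fun i => i = 1 ∨ w (i - 1) ≠ 2) h hik
  exact not_not.1 (not_or.1 this).2

/-- The least element of the fibre of `w` under the border word: left-arrows as far left as
possible, up-arrows as low as possible. -/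
noncomputable def botOfWord (n : ℕ) (w : ℕ → Fin 3) (hn : 1 ≤ n) : FB n where
  cells := {c | (c.1 = 1 ∧ c.2 = n) ∨ IsBorder n c ∨
    (2 ≤ c.1 ∧ c.1 ≤ n ∧ w (c.1 - 1) ≠ 2 ∧ c.2 = n) ∨
    (1 ≤ c.2 ∧ c.2 < n ∧ w c.2 ≠ 0 ∧ c.1 = openRowAbove w c.2)}
  isCell_of_mem := by
    rintro ⟨p, q⟩ hc
    have := openRowAbove_le w q
    have := one_le_openRowAbove (w := w) (k := q)
    simp only [Set.mem_ofPred_eq, IsBorder] at hc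
    simp only [IsCell]
    omega
  root_mem := Or.inl ⟨rfl, rfl⟩
  border_mem _ hc := Or.inr (Or.inl hc)
  supported := by
    rintro ⟨p, q⟩ hc hne
    simp only [Set.mem_ofPred_eq, IsBorder, Ne, mk_eq_root_iff] at hc hne ⊢
    rcases hc with hc | ⟨hp, hpn, rfl⟩ | ⟨hp, hpn, hw, rfl⟩ | ⟨hq, hqn, hw, rfl⟩
    · exact absurd hc hne
    · by_cases hw : w (p - 1) = 0
      · exact Or.inl ⟨n, by omega, Or.inr (Or.inr (Or.inl ⟨hp, hpn, by omega, rfl⟩))⟩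
      · have := openRowAbove_le w (p - 1)
        exact Or.inr ⟨_, by omega, Or.inr (Or.inr (Or.inr ⟨by omega, by omega, hw, rfl⟩))⟩
    · exact Or.inr ⟨1, by omega, Or.inl ⟨rfl, rfl⟩⟩
    · have := openRowAbove_le w q
      have := one_le_openRowAbove (w := w) hq
      rcases openRowAbove_spec (w := w) hq with h1 | h1
      · exact Or.inl ⟨n, hqn, Or.inl ⟨h1, rfl⟩⟩
      · exact Or.inl ⟨n, hqn, by omega⟩

lemma mem_botOfWord (hn : 1 ≤ n) : ((p, q) : Cell) ∈ (botOfWord n w hn).cells ↔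
    (p = 1 ∧ q = n) ∨ (2 ≤ p ∧ p ≤ n ∧ q = p - 1) ∨
      (2 ≤ p ∧ p ≤ n ∧ w (p - 1) ≠ 2 ∧ q = n) ∨
      (1 ≤ q ∧ q < n ∧ w q ≠ 0 ∧ p = openRowAbove w q) :=
  Iff.rfl

lemma isUpArrow_botOfWord (hn : 1 ≤ n) (hq : 1 ≤ q) (hqn : q < n) :
    IsUpArrow (botOfWord n w hn) (if w q = 0 then q + 1 else openRowAbove w q, q) := by
  have := openRowAbove_le w q
  split_ifs with hw
  · refine ⟨(botOfWord n w hn).mem_border_s6 hq hqn, by simp only [Ne, mk_eq_root_iff]; omega, ?_⟩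
    intro i hi hmem
    dsimp only at hi hmem
    rw [mem_botOfWord] at hmem
    omega
  · refine ⟨(mem_botOfWord hn).2 (by omega), by simp only [Ne, mk_eq_root_iff]; omega, ?_⟩
    intro i hi hmem
    dsimp only at hi hmem
    rw [mem_botOfWord] at hmem
    omega

lemma isLeftArrow_botOfWord (hn : 1 ≤ n) (hp : 2 ≤ p) (hpn : p ≤ n) :
    IsLeftArrow (botOfWord n w hn) (p, if w (p - 1) = 2 then p - 1 else n) := by
  split_ifs with hw
  · refine ⟨(botOfWord n w hn).border_mem _ ⟨hp, hpn, rfl⟩,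
      by simp only [Ne, mk_eq_root_iff]; omega, ?_⟩
    intro j hj hmem
    dsimp only at hj hmem
    rw [mem_botOfWord] at hmem
    rcases hmem with hmem | hmem | hmem | ⟨hj1, -, -, rfl⟩
    · omega
    · omega
    · omega
    · rcases openRowAbove_spec (w := w) hj1 with h1 | h1 <;> omega
  · refine ⟨(mem_botOfWord hn).2 (by omega), by simp only [Ne, mk_eq_root_iff]; omega, ?_⟩
    intro j hj hmem
    have := ((botOfWord n w hn).isCell_of_mem _ hmem).2.2.2.1
    omega

lemma nuLetter_botOfWord (hn : 1 ≤ n) (hk : 1 ≤ k) (hkn : k < n) :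
    nuLetter (botOfWord n w hn) k = w k := by
  have h0 : nuLetter (botOfWord n w hn) k = 0 ↔ w k = 0 := by
    rw [nuLetter_eq_zero_iff, (isUpArrow_botOfWord hn hk hkn).isUpArrow_iff]
    have := openRowAbove_le w k
    split_ifs <;> omega
  have h2 : nuLetter (botOfWord n w hn) k = 2 ↔ w k = 2 := by
    rw [nuLetter_eq_two_iff,
      (isLeftArrow_botOfWord hn (p := k + 1) (by omega) hkn).isLeftArrow_iff,
      Nat.add_sub_cancel]
    split_ifs <;> omega
  omega

lemma isBorder_of_isFree_botOfWord (hn : 1 ≤ n) {c : Cell}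
    (hfree : IsFree (botOfWord n w hn) c) (hmem : c ∈ (botOfWord n w hn).cells) :
    IsBorder n c := by
  obtain ⟨p, q⟩ := c
  obtain ⟨-, ⟨i, hi, hup⟩, -⟩ := hfree
  dsimp only at hi hup
  have hi1 : 1 ≤ i := ((botOfWord n w hn).isCell_of_mem _ hup.1).1
  have hq : 1 ≤ q := ((botOfWord n w hn).isCell_of_mem _ hup.1).2.2.1
  have hrow := (isUpArrow_botOfWord hn hq hup.snd_lt).isUpArrow_iff.1 hup
  have := hup.snd_lt
  have := openRowAbove_le w q
  rw [mem_botOfWord] at hmem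
  show 2 ≤ p ∧ p ≤ n ∧ q = p - 1
  split_ifs at hrow <;> omega

/-- A row strictly between the up-arrow of column `q` and row `q + 1` of a tableau dominating `w`
has its left-arrow on the border, so it cannot contain the up-arrow. -/
lemma IsUpArrow.fst_le_openRowAbove (hT : IsUpArrow T (i, q))
    (hw : ∀ k, 1 ≤ k → k < n → w k ≤ nuLetter T k) (hwq : w q ≠ 0) :
    i ≤ openRowAbove w q := by
  have hq : 1 ≤ q := (T.isCell_of_mem _ hT.1).2.2.1
  have hqn := hT.snd_lt
  have hiq : i ≠ q + 1 := by
    rintro rfl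
    have := (nuLetter_eq_zero_iff T q).2 hT
    have := hw q hq hqn
    omega
  have := hT.fst_le
  have := one_le_openRowAbove (w := w) hq
  by_contra hlt
  have hw2 := eq_two_of_openRowAbove_lt (not_le.1 hlt) (by omega : i ≤ q)
  have hleft := (nuLetter_eq_two_iff T (i - 1)).1
    (by have := hw (i - 1) (by omega) (by omega); omega)
  rw [Nat.sub_add_cancel (by omega)] at hleft
  have := hleft.le_of_mem hT.1
  omega

lemma botOfWord_lhd (hn : 1 ≤ n) (hw : ∀ k, 1 ≤ k → k < n → w k ≤ nuLetter T k) :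
    Lhd (botOfWord n w hn) T := by
  refine ⟨colSp_subset_colSp fun i i' q hB hT => ?_, rowSp_subset_rowSp fun p j j' hB hT => ?_,
    fun c hfree _ hmem => T.border_mem c (isBorder_of_isFree_botOfWord hn hfree hmem)⟩
  · have hq := ((botOfWord n w hn).isCell_of_mem _ hB.1).2.2.1
    rw [(isUpArrow_botOfWord hn hq hB.snd_lt).isUpArrow_iff.1 hB]
    split_ifs with hwq
    · exact hT.fst_le
    · exact hT.fst_le_openRowAbove hw hwq
  · have hp := hB.two_le_fst
    have hpn := ((botOfWord n w hn).isCell_of_mem _ hB.1).2.1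
    rw [(isLeftArrow_botOfWord hn hp hpn).isLeftArrow_iff.1 hB]
    split_ifs with hwp
    · have hleft := (nuLetter_eq_two_iff T (p - 1)).1
        (by have := hw (p - 1) (by omega) (by omega); omega)
      rw [Nat.sub_add_cancel (by omega)] at hleft
      exact (hT.snd_eq hleft).le
    · exact (T.isCell_of_mem _ hT.1).2.2.2.1

end Bottom
section Top

variable {w : ℕ → Fin 3} {i j k p q : ℕ}

/-- The nearest column weakly left of column `i` whose up-arrow, according to `w`, is not forced
onto the border; column `n` if there is none. -/
noncomputable def openColLeft (w : ℕ → Fin 3) (n i : ℕ) : ℕ :=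
  Nat.find (⟨n, Or.inr rfl⟩ : ∃ j, (i ≤ j ∧ w j ≠ 0) ∨ j = n)

lemma openColLeft_le (w : ℕ → Fin 3) (n i : ℕ) : openColLeft w n i ≤ n :=
  Nat.find_min' _ (Or.inr rfl)

lemma openColLeft_spec (w : ℕ → Fin 3) (n i : ℕ) :
    (i ≤ openColLeft w n i ∧ w (openColLeft w n i) ≠ 0) ∨ openColLeft w n i = n :=
  Nat.find_spec (⟨n, Or.inr rfl⟩ : ∃ j, (i ≤ j ∧ w j ≠ 0) ∨ j = n)

lemma le_openColLeft (hin : i ≤ n) : i ≤ openColLeft w n i := by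
  rcases openColLeft_spec w n i with h | h <;> omega

lemma eq_zero_of_lt_openColLeft (hij : i ≤ j) (hj : j < openColLeft w n i) : w j = 0 :=
  not_not.1 fun hw => Nat.find_min _ hj (Or.inl ⟨hij, hw⟩)

/-- The greatest element of the fibre of `w` under the border word: up-arrows as high as
possible, left-arrows as far right as possible. -/
noncomputable def topOfWord (n : ℕ) (w : ℕ → Fin 3) (hn : 1 ≤ n) : FB n where
  cells := {c | (c.1 = 1 ∧ c.2 = n) ∨ IsBorder n c ∨
    (c.1 = 1 ∧ 1 ≤ c.2 ∧ c.2 < n ∧ w c.2 ≠ 0) ∨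
    (2 ≤ c.1 ∧ c.1 ≤ n ∧ w (c.1 - 1) ≠ 2 ∧ c.2 = openColLeft w n c.1)}
  isCell_of_mem := by
    rintro ⟨p, q⟩ hc
    have := openColLeft_le w n p
    have := le_openColLeft (w := w) (i := p) (n := n)
    simp only [Set.mem_ofPred_eq, IsBorder] at hc
    simp only [IsCell]
    omega
  root_mem := Or.inl ⟨rfl, rfl⟩
  border_mem _ hc := Or.inr (Or.inl hc)
  supported := by
    rintro ⟨p, q⟩ hc hne
    simp only [Set.mem_ofPred_eq, IsBorder, Ne, mk_eq_root_iff] at hc hne ⊢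
    rcases hc with hc | ⟨hp, hpn, rfl⟩ | ⟨rfl, hq, hqn, hw⟩ | ⟨hp, hpn, hw, rfl⟩
    · exact absurd hc hne
    · by_cases hw : w (p - 1) = 0
      · have := le_openColLeft (w := w) hpn
        exact Or.inl ⟨_, by omega, Or.inr (Or.inr (Or.inr ⟨hp, hpn, by omega, rfl⟩))⟩
      · exact Or.inr ⟨1, by omega, Or.inr (Or.inr (Or.inl ⟨rfl, by omega, by omega, hw⟩))⟩
    · exact Or.inl ⟨n, hqn, Or.inl ⟨rfl, rfl⟩⟩
    · have := le_openColLeft (w := w) hpn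
      have := openColLeft_le w n p
      rcases openColLeft_spec w n p with h | h <;> exact Or.inr ⟨1, by omega, by omega⟩

lemma mem_topOfWord (hn : 1 ≤ n) : ((p, q) : Cell) ∈ (topOfWord n w hn).cells ↔
    (p = 1 ∧ q = n) ∨ (2 ≤ p ∧ p ≤ n ∧ q = p - 1) ∨
      (p = 1 ∧ 1 ≤ q ∧ q < n ∧ w q ≠ 0) ∨
      (2 ≤ p ∧ p ≤ n ∧ w (p - 1) ≠ 2 ∧ q = openColLeft w n p) :=
  Iff.rfl

lemma isUpArrow_topOfWord (hn : 1 ≤ n) (hq : 1 ≤ q) (hqn : q < n) :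
    IsUpArrow (topOfWord n w hn) (if w q = 0 then q + 1 else 1, q) := by
  split_ifs with hw
  · refine ⟨(topOfWord n w hn).mem_border_s6 hq hqn, by simp only [Ne, mk_eq_root_iff]; omega, ?_⟩
    intro i hi hmem
    dsimp only at hi hmem
    rw [mem_topOfWord] at hmem
    rcases hmem with hmem | hmem | hmem | ⟨-, -, -, rfl⟩
    · omega
    · omega
    · omega
    · rcases openColLeft_spec w n i with h | h <;> omega
  · refine ⟨(mem_topOfWord hn).2 (by omega), by simp only [Ne, mk_eq_root_iff]; omega, ?_⟩
    intro i hi hmem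
    have := ((topOfWord n w hn).isCell_of_mem _ hmem).1
    dsimp only at hi
    omega

lemma isLeftArrow_topOfWord (hn : 1 ≤ n) (hp : 2 ≤ p) (hpn : p ≤ n) :
    IsLeftArrow (topOfWord n w hn) (p, if w (p - 1) = 2 then p - 1 else openColLeft w n p) := by
  have := le_openColLeft (w := w) hpn
  split_ifs with hw
  · refine ⟨(topOfWord n w hn).border_mem _ ⟨hp, hpn, rfl⟩,
      by simp only [Ne, mk_eq_root_iff]; omega, ?_⟩
    intro j hj hmem
    dsimp only at hj hmem
    rw [mem_topOfWord] at hmem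
    omega
  · refine ⟨(mem_topOfWord hn).2 (by omega), by simp only [Ne, mk_eq_root_iff]; omega, ?_⟩
    intro j hj hmem
    dsimp only at hj hmem
    rw [mem_topOfWord] at hmem
    omega

lemma nuLetter_topOfWord (hn : 1 ≤ n) (hk : 1 ≤ k) (hkn : k < n) :
    nuLetter (topOfWord n w hn) k = w k := by
  have h0 : nuLetter (topOfWord n w hn) k = 0 ↔ w k = 0 := by
    rw [nuLetter_eq_zero_iff, (isUpArrow_topOfWord hn hk hkn).isUpArrow_iff]
    split_ifs <;> omega
  have h2 : nuLetter (topOfWord n w hn) k = 2 ↔ w k = 2 := by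
    rw [nuLetter_eq_two_iff,
      (isLeftArrow_topOfWord hn (p := k + 1) (by omega) hkn).isLeftArrow_iff,
      Nat.add_sub_cancel]
    have := le_openColLeft (w := w) (i := k + 1) hkn
    split_ifs <;> omega
  omega

lemma isBorder_of_isFree_topOfWord (hn : 1 ≤ n) {c : Cell}
    (hfree : IsFree (topOfWord n w hn) c) : IsBorder n c := by
  obtain ⟨p, q⟩ := c
  obtain ⟨hc, ⟨i, hi, hup⟩, ⟨j, hj, hleft⟩⟩ := hfree
  dsimp only at hi hj hup hleft
  have hq : 1 ≤ q := hc.2.2.1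
  have hqp : p ≤ 2 ∨ p - 1 ≤ q := hc.2.2.2.2
  have hp := hleft.two_le_fst
  have hpn : p ≤ n := hc.2.1
  have hrow := (isUpArrow_topOfWord hn hq hup.snd_lt).isUpArrow_iff.1 hup
  have hcol := (isLeftArrow_topOfWord hn hp hpn).isLeftArrow_iff.1 hleft
  show 2 ≤ p ∧ p ≤ n ∧ q = p - 1
  by_contra hne
  split_ifs at hcol with hw
  · omega
  · have := eq_zero_of_lt_openColLeft (w := w) (n := n) (by omega : p ≤ q) (by omega)
    rw [if_pos this] at hrow
    omega

/-- A column strictly between column `p - 1` and the left-arrow of row `p` of a tableau dominated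
by `w` has its up-arrow on the border, so it cannot contain the left-arrow. -/
lemma IsLeftArrow.openColLeft_le_snd (hT : IsLeftArrow T (p, j))
    (hw : ∀ k, 1 ≤ k → k < n → nuLetter T k ≤ w k) (hwp : w (p - 1) ≠ 2) :
    openColLeft w n p ≤ j := by
  have hp := hT.two_le_fst
  have hpn : p ≤ n := (T.isCell_of_mem _ hT.1).2.1
  have hjp : j ≠ p - 1 := by
    rintro rfl
    have := (nuLetter_eq_two_iff T (p - 1)).2 (by rwa [Nat.sub_add_cancel (by omega)])
    have := hw (p - 1) (by omega) (by omega)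
    omega
  have := hT.pred_fst_le
  have := openColLeft_le w n p
  by_contra hlt
  have hw0 := eq_zero_of_lt_openColLeft (by omega : p ≤ j) (not_le.1 hlt)
  have hup := (nuLetter_eq_zero_iff T j).1 (by have := hw j (by omega) (by omega); omega)
  have := hup.le_of_mem hT.1
  omega

lemma lhd_topOfWord (hn : 1 ≤ n) (hw : ∀ k, 1 ≤ k → k < n → nuLetter T k ≤ w k) :
    Lhd T (topOfWord n w hn) := by
  refine ⟨colSp_subset_colSp fun i i' q hT hU => ?_, rowSp_subset_rowSp fun p j j' hT hU => ?_,
    fun c _ hfree _ => (topOfWord n w hn).border_mem c (isBorder_of_isFree_topOfWord hn hfree)⟩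
  · have hq : 1 ≤ q := (T.isCell_of_mem _ hT.1).2.2.1
    rw [(isUpArrow_topOfWord hn hq hT.snd_lt).isUpArrow_iff.1 hU]
    split_ifs with hwq
    · have hup := (nuLetter_eq_zero_iff T q).1
        (by have := hw q hq hT.snd_lt; omega)
      exact (hup.fst_eq hT).le
    · exact (T.isCell_of_mem _ hT.1).1
  · have hp := hT.two_le_fst
    have hpn : p ≤ n := (T.isCell_of_mem _ hT.1).2.1
    rw [(isLeftArrow_topOfWord hn hp hpn).isLeftArrow_iff.1 hU]
    split_ifs with hwp
    · exact hT.pred_fst_le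
    · exact hT.openColLeft_le_snd hw hwp

end Top

lemma nuMap_of_isMeet (hn : 1 ≤ n) {x y m : FB n} (h : IsMeet x y m) :
    nuMap m = fun k => min (nuMap x k) (nuMap y k) := by
  funext k
  have hkn : k.1 + 1 < n := by omega
  let w i := min (nuLetter x i) (nuLetter y i)
  have hbot : Lhd (botOfWord n w hn) m :=
    h.2.2 _ (botOfWord_lhd hn fun _ _ _ => min_le_left _ _)
      (botOfWord_lhd hn fun _ _ _ => min_le_right _ _)
  refine le_antisymm (le_min (h.1.nuLetter_le (by omega) hkn) (h.2.1.nuLetter_le (by omega) hkn)) ?_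
  have hle := hbot.nuLetter_le (by omega) hkn
  rwa [nuLetter_botOfWord hn (by omega) hkn] at hle

lemma nuMap_of_isJoin (hn : 1 ≤ n) {x y j : FB n} (h : IsJoin x y j) :
    nuMap j = fun k => max (nuMap x k) (nuMap y k) := by
  funext k
  have hkn : k.1 + 1 < n := by omega
  let w i := max (nuLetter x i) (nuLetter y i)
  have htop : Lhd j (topOfWord n w hn) :=
    h.2.2 _ (lhd_topOfWord hn fun _ _ _ => le_max_left _ _)
      (lhd_topOfWord hn fun _ _ _ => le_max_right _ _)
  refine le_antisymm ?_ (max_le (h.1.nuLetter_le (by omega) hkn) (h.2.1.nuLetter_le (by omega) hkn))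
  have hle := htop.nuLetter_le (by omega) hkn
  rwa [nuLetter_topOfWord hn (by omega) hkn] at hle

lemma nuMap_surjective (hn : 1 ≤ n) : Function.Surjective (nuMap (n := n)) := fun v => by
  refine ⟨botOfWord n (fun k => if h : k - 1 < n - 1 then v ⟨k - 1, h⟩ else 0) hn, ?_⟩
  funext k
  simp [nuMap, nuLetter_botOfWord hn (by omega : 1 ≤ k.1 + 1) (by omega : k.1 + 1 < n)]

/-- the relation `ν_{T₁} = ν_{T₂}` is a lattice congruence on
`esTam n`, and `T ↦ ν_T` induces a lattice isomorphism from the quotient onto the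
product lattice `[3]^(n-1)` (it is surjective, its fibers are the congruence
classes, and it maps meets to pointwise minima and joins to pointwise maxima). -/
theorem border_congruence_and_quotient (n : ℕ) (hn : 1 ≤ n) :
    (∀ x1 x2 y1 y2 m1 m2 : FB n, nuMap x1 = nuMap x2 → nuMap y1 = nuMap y2 →
      IsMeet x1 y1 m1 → IsMeet x2 y2 m2 → nuMap m1 = nuMap m2) ∧
    (∀ x1 x2 y1 y2 j1 j2 : FB n, nuMap x1 = nuMap x2 → nuMap y1 = nuMap y2 →
      IsJoin x1 y1 j1 → IsJoin x2 y2 j2 → nuMap j1 = nuMap j2) ∧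
    Function.Surjective (nuMap (n := n)) ∧
    (∀ x y m : FB n, IsMeet x y m →
      nuMap m = fun k => min (nuMap x k) (nuMap y k)) ∧
    (∀ x y j : FB n, IsJoin x y j →
      nuMap j = fun k => max (nuMap x k) (nuMap y k)) := by
  refine ⟨fun x1 x2 y1 y2 m1 m2 hx hy h1 h2 => ?_, fun x1 x2 y1 y2 j1 j2 hx hy h1 h2 => ?_,
    nuMap_surjective hn, fun _ _ _ => nuMap_of_isMeet hn, fun _ _ _ => nuMap_of_isJoin hn⟩
  · rw [nuMap_of_isMeet hn h1, nuMap_of_isMeet hn h2, hx, hy]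
  · rw [nuMap_of_isJoin hn h1, nuMap_of_isJoin hn h2, hx, hy]

end EsTam
end
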